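/- arXiv:2404.02116 — 7 statements merged into one kernel-verified Lean document; each statement's English description precedes it below -/
import Mathlib

section
/- Let X be an ordered Banach space and let (x_j) be an increasing net of elements of span(X_+). If (x_j) converges in the norm of X to some x ∈ X, then x ∈ span(X_+) and the net converges to x with respect to the span norm ‖·‖_{span(X_+)}. -/
open Filter Topology

/-- The candidate norm on the span of the cone `C`. -/
noncomputable def spanNorm {X : Type*} [NormedAddCommGroup X] (C : Set X) (x : X) : ℝ :=
  sInf {r : ℝ | ∃ y ∈ C, ∃ z ∈ C, x = y - z ∧ r = ‖y‖ + ‖z‖}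

/-- Let `X` be an ordered Banach space with closed cone `C` and let `(x_j)`
be an increasing net (indexed by a directed set `ι`) of elements of `span C = C - C`.
If `(x_j)` converges in the norm of `X` to some `x`, then `x ∈ span C` and the net
converges to `x` with respect to the span norm. -/
theorem stmt2 {X : Type*} [NormedAddCommGroup X] [NormedSpace ℝ X] [CompleteSpace X]
    (C : Set X) (hclosed : IsClosed C)
    (hadd : ∀ x ∈ C, ∀ y ∈ C, x + y ∈ C)
    (hsmul : ∀ (a : ℝ), 0 ≤ a → ∀ x ∈ C, a • x ∈ C)
    (hpointed : ∀ x ∈ C, -x ∈ C → x = 0)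
    {ι : Type*} [Nonempty ι] [SemilatticeSup ι]
    (u : ι → X)
    (hspan : ∀ i, u i ∈ {x | ∃ y ∈ C, ∃ z ∈ C, x = y - z})
    (hmono : ∀ i j, i ≤ j → u j - u i ∈ C)
    (x : X) (hconv : Tendsto u atTop (𝓝 x)) :
    x ∈ {x | ∃ y ∈ C, ∃ z ∈ C, x = y - z} ∧
    Tendsto (fun i => spanNorm C (x - u i)) atTop (𝓝 0) := by
  -- 0 ∈ C
  obtain ⟨i₀⟩ := ‹Nonempty ι›
  obtain ⟨y₀, hy₀, z₀, hz₀, hxy₀⟩ := hspan i₀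
  have h0 : (0 : X) ∈ C := by
    have := hsmul 0 le_rfl y₀ hy₀
    simpa using this
  -- x - u i ∈ C for every i
  have hkey : ∀ i, x - u i ∈ C := by
    intro i
    have htd : Tendsto (fun j => u j - u i) atTop (𝓝 (x - u i)) :=
      hconv.sub tendsto_const_nhds
    refine hclosed.mem_of_tendsto htd ?_
    filter_upwards [eventually_ge_atTop i] with j hj using hmono i j hj
  constructor
  · obtain ⟨y, hy, z, hz, hxyz⟩ := hspan i₀
    refine ⟨x - u i₀ + y, hadd _ (hkey i₀) _ hy, z, hz, ?_⟩
    rw [hxyz] at *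
    abel
  · have hnonneg : ∀ i, 0 ≤ spanNorm C (x - u i) := by
      intro i
      apply Real.sInf_nonneg
      rintro r ⟨y, _, z, _, _, rfl⟩
      positivity
    have hle : ∀ i, spanNorm C (x - u i) ≤ ‖x - u i‖ := by
      intro i
      have : (‖x - u i‖ : ℝ) = ‖x - u i‖ + ‖(0 : X)‖ := by simp
      rw [this]
      apply csInf_le
      · exact ⟨0, fun r ⟨y, _, z, _, _, hr⟩ => by rw [hr]; positivity⟩
      · exact ⟨x - u i, hkey i, 0, h0, by simp, rfl⟩
    have hnorm : Tendsto (fun i => ‖x - u i‖) atTop (𝓝 0) := by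
      have := (tendsto_const_nhds.sub hconv : Tendsto (fun i => x - u i) atTop (𝓝 (x - x)))
      rw [sub_self] at this
      simpa using this.norm
    exact tendsto_of_tendsto_of_tendsto_of_le_of_le tendsto_const_nhds hnorm hnonneg hle
end

section
/- Let X and Z be vector lattices and let J : X → Z be a bipositive linear map (i.e., Jx ≥ 0 if and only if x ≥ 0). If the image J(X_+) is a face of Z_+, then J is a lattice homomorphism, i.e., J|x| = |Jx| for all x ∈ X. -/
/-- Let `X` and `Z` be vector lattices and `J : X → Z` a bipositive linear map.
If `J(X₊)` is a face of `Z₊`, then `J` is a lattice homomorphism: `J|x| = |J x|`. -/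
theorem stmt3 {X Z : Type*}
    [Lattice X] [AddCommGroup X] [CovariantClass X X (· + ·) (· ≤ ·)] [Module ℝ X]
    [Lattice Z] [AddCommGroup Z] [CovariantClass Z Z (· + ·) (· ≤ ·)] [Module ℝ Z]
    (J : X →ₗ[ℝ] Z)
    (hbipos : ∀ x : X, 0 ≤ J x ↔ 0 ≤ x)
    (hface : ∀ u v : Z, 0 ≤ u → u ≤ v → v ∈ J '' {x : X | 0 ≤ x} →
      u ∈ J '' {x : X | 0 ≤ x}) :
    ∀ x : X, J |x| = |J x| := by
  have hmono : ∀ a b : X, J a ≤ J b → a ≤ b := by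
    intro a b h
    have h1 := (hbipos (b - a)).mp (by rw [map_sub]; exact sub_nonneg.mpr h)
    exact sub_nonneg.mp h1
  have hmono' : ∀ a b : X, a ≤ b → J a ≤ J b := by
    intro a b h
    have h1 := (hbipos (b - a)).mpr (sub_nonneg.mpr h)
    rw [map_sub] at h1
    exact sub_nonneg.mp h1
  intro x
  have hle : |J x| ≤ J |x| := abs_le'.mpr
    ⟨hmono' _ _ (le_abs_self x),
     by have := hmono' _ _ (neg_le_abs x); rwa [map_neg] at this⟩
  obtain ⟨y, hy, hJy⟩ := hface |J x| (J |x|) (abs_nonneg _) hle ⟨|x|, abs_nonneg x, rfl⟩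
  have hxy : |x| ≤ y := abs_le'.mpr
    ⟨hmono _ _ (by rw [hJy]; exact le_abs_self (J x)),
     hmono _ _ (by rw [map_neg, hJy]; exact neg_le_abs (J x))⟩
  exact le_antisymm (hJy ▸ hmono' _ _ hxy) hle
end

section
/- Let X and Z be vector lattices and J : X → Z a bipositive linear map such that J(X_+) is a face of Z_+. Then the image JX is a lattice ideal in Z, i.e., if 0 ≤ x ≤ y in Z and y ∈ JX then x ∈ JX, and JX is a sublattice. -/
/-- Let `X` and `Z` be vector lattices and `J : X → Z` a bipositive linear map
such that `J(X₊)` is a face of `Z₊`. Then the image `JX` is a lattice ideal in `Z`: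
if `0 ≤ u ≤ v` in `Z` and `v ∈ JX` then `u ∈ JX`, and `JX` is a sublattice of `Z`. -/
theorem stmt4 {X Z : Type*}
    [Lattice X] [AddCommGroup X] [CovariantClass X X (· + ·) (· ≤ ·)] [Module ℝ X]
    [Lattice Z] [AddCommGroup Z] [CovariantClass Z Z (· + ·) (· ≤ ·)] [Module ℝ Z]
    (J : X →ₗ[ℝ] Z)
    (hbipos : ∀ x : X, 0 ≤ J x ↔ 0 ≤ x)
    (hface : ∀ u v : Z, 0 ≤ u → u ≤ v → v ∈ J '' {x : X | 0 ≤ x} →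
      u ∈ J '' {x : X | 0 ≤ x}) :
    (∀ u v : Z, 0 ≤ u → u ≤ v → v ∈ Set.range J → u ∈ Set.range J) ∧
    (∀ x y : X, J x ⊔ J y ∈ Set.range J) ∧
    (∀ x y : X, J x ⊓ J y ∈ Set.range J) := by
  have Jmono : ∀ a b : X, a ≤ b → J a ≤ J b := by
    intro a b h
    have : (0:Z) ≤ J (b - a) := (hbipos _).2 (by simpa using sub_nonneg.2 h)
    rw [map_sub] at this
    exact sub_nonneg.mp this
  have key : ∀ w : X, ∃ p : X, 0 ≤ p ∧ J p = (J w) ⊔ 0 := by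
    intro w
    have h0 : (0:X) ≤ w ⊔ 0 := le_sup_right
    have h1 : J w ⊔ 0 ≤ J (w ⊔ 0) := by
      refine sup_le (Jmono _ _ le_sup_left) ?_
      simpa using Jmono 0 (w ⊔ 0) h0
    have hmem : J (w ⊔ 0) ∈ J '' {x : X | 0 ≤ x} := ⟨w ⊔ 0, h0, rfl⟩
    obtain ⟨p, hp, hJp⟩ := hface _ _ le_sup_right h1 hmem
    exact ⟨p, hp, hJp⟩
  have hsup : ∀ x y : X, J x ⊔ J y ∈ Set.range J := by
    intro x y
    obtain ⟨p, _, hJp⟩ := key (x - y)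
    refine ⟨p + y, ?_⟩
    rw [map_add, hJp, map_sub, sup_add, sub_add_cancel, zero_add]
  refine ⟨?_, hsup, ?_⟩
  · intro u v hu huv ⟨y, hy⟩
    have hy0 : (0:X) ≤ y := (hbipos y).1 (hy ▸ hu.trans huv)
    obtain ⟨p, _, hJp⟩ := hface u v hu huv ⟨y, hy0, hy⟩
    exact ⟨p, hJp⟩
  · intro x y
    obtain ⟨s, hs⟩ := hsup x y
    refine ⟨x + y - s, ?_⟩
    rw [map_sub, map_add, hs]
    rw [sub_eq_iff_eq_add]
    exact (inf_add_sup (J x) (J y)).symm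
end

section
/- Let X be an ordered Banach space that is also a vector lattice with respect to the same order, and assume the cone X_+ is normal. Then the formula |||x||| := sup{‖w‖ : 0 ≤ w ≤ |x|} defines a norm on X that is equivalent to the original norm and makes X a Banach lattice (i.e., |x| ≤ |y| implies |||x||| ≤ |||y|||). -/
/-!
The functional `|||x||| = sup {‖w‖ : 0 ≤ w ≤ |x|}` is finite and bounded by `M ‖v‖` whenever
`|x| ≤ v`, by normality. It is subadditive because, by Riesz decomposition, every
`0 ≤ w ≤ |x| + |y|` splits as `w₁ + w₂` with `0 ≤ w₁ ≤ |x|`, `0 ≤ w₂ ≤ |y|`, and it dominates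
`‖x‖ / 2` because `x = x⁺ - x⁻` with `x⁺, x⁻ ∈ [0, |x|]`.

The bound `|||x||| ≤ c ‖x‖` rests on Andô's theorem: a closed generating cone in a Banach space
admits decompositions `x = y - z`, `y, z ≥ 0`, `‖y‖, ‖z‖ ≤ C ‖x‖`; then `|x| ≤ y + z`. Writing
`B₊(r)` (`nonnegClosedBall X r`) for the positive part of the closed `r`-ball, Baire's theorem makes the closure of the
convex symmetric set `B₊(n) - B₊(n)` a neighbourhood of `0` for some `n`, and a geometric series
whose partial sums stay in the closed cone removes the closure.
-/

open Set Metric Filter Topology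
open scoped Pointwise

section LatticeOrderedGroup

variable {X : Type*} [Lattice X] [AddCommGroup X] [IsOrderedAddMonoid X]

theorem Icc_zero_add_subset {a b : X} (ha : 0 ≤ a) (hb : 0 ≤ b) :
    Icc 0 (a + b) ⊆ Icc 0 a + Icc 0 b := by
  rintro w ⟨hw, hwab⟩
  refine ⟨w ⊓ a, ⟨le_inf hw ha, inf_le_right⟩, w - w ⊓ a, ⟨sub_nonneg.2 inf_le_left, ?_⟩,
    add_sub_cancel _ _⟩
  rw [sub_le_iff_le_add', inf_add]
  exact le_inf (le_add_of_nonneg_right hb) hwab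

theorem abs_le_add_of_eq_sub {x y z : X} (hy : 0 ≤ y) (hz : 0 ≤ z) (h : x = y - z) :
    |x| ≤ y + z := by
  subst h
  refine abs_le'.2 ⟨?_, ?_⟩
  · exact (sub_le_self y hz).trans (le_add_of_nonneg_right hz)
  · rw [neg_sub]
    exact (sub_le_self z hy).trans (le_add_of_nonneg_left hy)

theorem abs_smul_of_lattice {𝕜 : Type*} [Field 𝕜] [LinearOrder 𝕜] [IsStrictOrderedRing 𝕜]
    [Module 𝕜 X] [PosSMulMono 𝕜 X] (a : 𝕜) (x : X) : |a • x| = |a| • |x| := by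
  have hpos : ∀ c : 𝕜, 0 < c → ∀ y : X, |c • y| = c • |y| := fun c hc y =>
    calc |c • y| = c • y ⊔ c • -y := by rw [smul_neg]; rfl
      _ = c • |y| := ((OrderIso.smulRight hc).map_sup y (-y)).symm
  rcases lt_trichotomy a 0 with ha | rfl | ha
  · rw [← neg_neg a, neg_smul, abs_neg, hpos _ (neg_pos.2 ha), neg_neg, abs_of_neg ha]
  · simp
  · rw [hpos a ha, abs_of_pos ha]

end LatticeOrderedGroup

theorem Icc_zero_smul {𝕜 X : Type*} [Field 𝕜] [LinearOrder 𝕜] [IsStrictOrderedRing 𝕜]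
    [AddCommGroup X] [PartialOrder X] [Module 𝕜 X] [PosSMulMono 𝕜 X] {c : 𝕜} (hc : 0 < c)
    (u : X) : Icc 0 (c • u) = c • Icc 0 u := by
  simpa [image_smul] using ((OrderIso.smulRight hc).image_Icc 0 u).symm

theorem bddAbove_norm_image_Icc {X : Type*} [Norm X] [Preorder X] [Zero X] {M : ℝ}
    (hnormal : ∀ x y : X, 0 ≤ x → x ≤ y → ‖x‖ ≤ M * ‖y‖) (u : X) :
    BddAbove (norm '' Icc 0 u) :=
  ⟨M * ‖u‖, forall_mem_image.2 fun w hw => hnormal w u hw.1 hw.2⟩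

section LatticeNorm

variable {X : Type*} [NormedAddCommGroup X] [Lattice X]

noncomputable def latticeNorm (x : X) : ℝ := sSup (norm '' Icc 0 |x|)

theorem norm_le_latticeNorm {M : ℝ} (hnormal : ∀ x y : X, 0 ≤ x → x ≤ y → ‖x‖ ≤ M * ‖y‖)
    {w x : X} (hw : w ∈ Icc 0 |x|) : ‖w‖ ≤ latticeNorm x :=
  le_csSup (bddAbove_norm_image_Icc hnormal _) (mem_image_of_mem _ hw)

variable [IsOrderedAddMonoid X] {M : ℝ}

theorem latticeNorm_zero : latticeNorm (0 : X) = 0 := by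
  simp [latticeNorm]

theorem latticeNorm_le_of_abs_le (hnormal : ∀ x y : X, 0 ≤ x → x ≤ y → ‖x‖ ≤ M * ‖y‖)
    {x v : X} (h : |x| ≤ v) : latticeNorm x ≤ M * ‖v‖ :=
  csSup_le ((nonempty_Icc.2 (abs_nonneg x)).image _)
    (forall_mem_image.2 fun w hw => hnormal w v hw.1 (hw.2.trans h))

theorem latticeNorm_mono (hnormal : ∀ x y : X, 0 ≤ x → x ≤ y → ‖x‖ ≤ M * ‖y‖)
    {x y : X} (h : |x| ≤ |y|) : latticeNorm x ≤ latticeNorm y :=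
  csSup_le_csSup (bddAbove_norm_image_Icc hnormal _) ((nonempty_Icc.2 (abs_nonneg x)).image _)
    (image_mono (Icc_subset_Icc_right h))

theorem norm_le_two_mul_latticeNorm (hnormal : ∀ x y : X, 0 ≤ x → x ≤ y → ‖x‖ ≤ M * ‖y‖)
    (x : X) : ‖x‖ ≤ 2 * latticeNorm x :=
  calc ‖x‖ = ‖x⁺ - x⁻‖ := by rw [posPart_sub_negPart]
    _ ≤ ‖x⁺‖ + ‖x⁻‖ := norm_sub_le _ _
    _ ≤ latticeNorm x + latticeNorm x := add_le_add
        (norm_le_latticeNorm hnormal ⟨posPart_nonneg x, sup_le (le_abs_self x) (abs_nonneg x)⟩)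
        (norm_le_latticeNorm hnormal ⟨negPart_nonneg x, sup_le (neg_le_abs x) (abs_nonneg x)⟩)
    _ = 2 * latticeNorm x := (two_mul _).symm

theorem eq_zero_of_latticeNorm_eq_zero (hnormal : ∀ x y : X, 0 ≤ x → x ≤ y → ‖x‖ ≤ M * ‖y‖)
    {x : X} (h : latticeNorm x = 0) : x = 0 :=
  norm_le_zero_iff.1 (by simpa [h] using norm_le_two_mul_latticeNorm hnormal x)

theorem latticeNorm_add_le (hnormal : ∀ x y : X, 0 ≤ x → x ≤ y → ‖x‖ ≤ M * ‖y‖)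
    (x y : X) : latticeNorm (x + y) ≤ latticeNorm x + latticeNorm y := by
  refine csSup_le ((nonempty_Icc.2 (abs_nonneg _)).image _) (forall_mem_image.2 fun w hw => ?_)
  obtain ⟨w₁, hw₁, w₂, hw₂, rfl⟩ :=
    Icc_zero_add_subset (abs_nonneg x) (abs_nonneg y) ⟨hw.1, hw.2.trans (abs_add_le x y)⟩
  exact (norm_add_le w₁ w₂).trans
    (add_le_add (norm_le_latticeNorm hnormal hw₁) (norm_le_latticeNorm hnormal hw₂))

theorem latticeNorm_smul [NormedSpace ℝ X] [PosSMulMono ℝ X] (a : ℝ) (x : X) :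
    latticeNorm (a • x) = |a| * latticeNorm x := by
  rcases eq_or_ne a 0 with rfl | ha
  · simp [latticeNorm_zero]
  have hset : norm '' Icc 0 |a • x| = |a| • (norm '' Icc 0 |x|) := by
    rw [abs_smul_of_lattice, Icc_zero_smul (abs_pos.2 ha), ← image_smul, ← image_smul,
      image_image, image_image]
    simp only [norm_smul, Real.norm_eq_abs, abs_abs, smul_eq_mul]
  rw [latticeNorm, hset, Real.sSup_smul_of_nonneg (abs_nonneg a), smul_eq_mul, latticeNorm]

end LatticeNorm

theorem zero_mem_interior_of_convex_of_neg_eq {E : Type*} [AddCommGroup E] [Module ℝ E]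
    [TopologicalSpace E] [IsTopologicalAddGroup E] [ContinuousConstSMul ℝ E] {s : Set E}
    (hs : Convex ℝ s) (hneg : -s = s) (hne : (interior s).Nonempty) : (0 : E) ∈ interior s := by
  obtain ⟨x, hx⟩ := hne
  have hx' : -x ∈ interior s := by
    obtain ⟨t, hts, ht, hxt⟩ := mem_interior.1 hx
    exact hneg ▸ mem_interior.2 ⟨-t, neg_subset_neg.2 hts, ht.neg, neg_mem_neg.2 hxt⟩
  simpa using hs.interior hx hx' (a := 1 / 2) (b := 1 / 2) (by norm_num) (by norm_num)
    (by norm_num)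

theorem orderClosedTopology_of_isClosed_nonneg {X : Type*} [AddCommGroup X] [PartialOrder X]
    [IsOrderedAddMonoid X] [TopologicalSpace X] [IsTopologicalAddGroup X]
    (hclosed : IsClosed {x : X | 0 ≤ x}) : OrderClosedTopology X where
  isClosed_le' := by
    have hle : {p : X × X | p.1 ≤ p.2} = (fun p => p.2 - p.1) ⁻¹' {x | 0 ≤ x} := by
      ext; simp [sub_nonneg]
    exact hle ▸ hclosed.preimage (by fun_prop)

section OrderedBanachSpace

variable {X : Type*} [NormedAddCommGroup X] [PartialOrder X]

variable (X) in
def nonnegClosedBall (r : ℝ) : Set X := Ici 0 ∩ closedBall 0 r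

theorem zero_mem_nonnegClosedBall_sub {r : ℝ} (hr : 0 ≤ r) :
    (0 : X) ∈ nonnegClosedBall X r - nonnegClosedBall X r :=
  ⟨0, ⟨le_rfl, mem_closedBall_self hr⟩, 0, ⟨le_rfl, mem_closedBall_self hr⟩, sub_zero 0⟩

theorem smul_mem_nonnegClosedBall [NormedSpace ℝ X] [PosSMulMono ℝ X] {c r : ℝ} (hc : 0 ≤ c)
    {y : X} (hy : y ∈ nonnegClosedBall X r) : c • y ∈ nonnegClosedBall X (c * r) := by
  refine ⟨smul_nonneg hc hy.1, ?_⟩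
  rw [mem_closedBall_zero_iff, norm_smul, Real.norm_of_nonneg hc]
  exact mul_le_mul_of_nonneg_left (mem_closedBall_zero_iff.1 hy.2) hc

theorem smul_nonnegClosedBall_sub_subset [NormedSpace ℝ X] [PosSMulMono ℝ X] {c : ℝ}
    (hc : 0 ≤ c) (r : ℝ) :
    c • (nonnegClosedBall X r - nonnegClosedBall X r) ⊆
      nonnegClosedBall X (c * r) - nonnegClosedBall X (c * r) := by
  rintro _ ⟨_, ⟨y, hy, z, hz, rfl⟩, rfl⟩
  exact ⟨c • y, smul_mem_nonnegClosedBall hc hy, c • z, smul_mem_nonnegClosedBall hc hz,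
    (smul_sub c y z).symm⟩

theorem exists_mem_nonnegClosedBall_sub_norm_sub_le_half {K : ℝ}
    (happrox : ∀ u : X,
      u ∈ closure (nonnegClosedBall X (K * ‖u‖) - nonnegClosedBall X (K * ‖u‖)))
    (u : X) : ∃ y ∈ nonnegClosedBall X (K * ‖u‖), ∃ z ∈ nonnegClosedBall X (K * ‖u‖),
      ‖u - (y - z)‖ ≤ ‖u‖ / 2 := by
  rcases eq_or_ne u 0 with rfl | hu
  · obtain ⟨y, hy, z, hz, hyz⟩ :=
      zero_mem_nonnegClosedBall_sub (X := X) (r := K * ‖(0 : X)‖) (by simp)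
    exact ⟨y, hy, z, hz, by simp [hyz]⟩
  obtain ⟨_, ⟨y, hy, z, hz, rfl⟩, hd⟩ :=
    Metric.mem_closure_iff.1 (happrox u) (‖u‖ / 2) (by positivity)
  exact ⟨y, hy, z, hz, (dist_eq_norm u (y - z) ▸ hd).le⟩

variable [IsOrderedAddMonoid X]

theorem mem_nonnegClosedBall_sub_of_tendsto_sum [CompleteSpace X] [OrderClosedTopology X]
    {y z : ℕ → X} {x : X} {a : ℝ} (hy : ∀ k, 0 ≤ y k) (hz : ∀ k, 0 ≤ z k)
    (hy_le : ∀ k, ‖y k‖ ≤ a * (1 / 2) ^ k) (hz_le : ∀ k, ‖z k‖ ≤ a * (1 / 2) ^ k)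
    (hpartial : Tendsto (fun n => ∑ k ∈ Finset.range n, (y k - z k)) atTop (𝓝 x)) :
    x ∈ nonnegClosedBall X (2 * a) - nonnegClosedBall X (2 * a) := by
  have hgeom : HasSum (fun k : ℕ => a * (1 / 2) ^ k) (2 * a) := by
    simpa only [mul_comm a 2] using hasSum_geometric_two.mul_left a
  have hys : Summable y := .of_norm_bounded hgeom.summable hy_le
  have hzs : Summable z := .of_norm_bounded hgeom.summable hz_le
  exact ⟨∑' k, y k, ⟨tsum_nonneg hy, mem_closedBall_zero_iff.2 (tsum_of_norm_bounded hgeom hy_le)⟩,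
    ∑' k, z k, ⟨tsum_nonneg hz, mem_closedBall_zero_iff.2 (tsum_of_norm_bounded hgeom hz_le)⟩,
    (hys.hasSum.sub hzs.hasSum).unique ((hys.sub hzs).hasSum_iff_tendsto_nat.2 hpartial)⟩

theorem mem_nonnegClosedBall_sub_of_forall_mem_closure [CompleteSpace X]
    [OrderClosedTopology X] {K : ℝ} (hK : 0 ≤ K)
    (happrox : ∀ u : X,
      u ∈ closure (nonnegClosedBall X (K * ‖u‖) - nonnegClosedBall X (K * ‖u‖)))
    (x : X) : x ∈ nonnegClosedBall X (2 * K * ‖x‖) - nonnegClosedBall X (2 * K * ‖x‖) := by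
  choose y hy z hz hyz using exists_mem_nonnegClosedBall_sub_norm_sub_le_half happrox
  -- the remainders `u k` of the successive approximations, halved at each step
  set u : ℕ → X := fun k => (fun w => w - (y w - z w))^[k] x
  have hu_succ : ∀ k, u (k + 1) = u k - (y (u k) - z (u k)) := fun k =>
    Function.iterate_succ_apply' _ k x
  have hu_norm : ∀ k, ‖u k‖ ≤ (1 / 2) ^ k * ‖x‖ := by
    intro k
    induction k with
    | zero => simp [u]
    | succ k ih =>
      rw [hu_succ, pow_succ]
      linarith [hyz (u k)]
  have hbound : ∀ k, ∀ w ∈ nonnegClosedBall X (K * ‖u k‖), ‖w‖ ≤ K * ‖x‖ * (1 / 2) ^ k :=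
    fun k w hw => calc
      ‖w‖ ≤ K * ‖u k‖ := mem_closedBall_zero_iff.1 hw.2
      _ ≤ K * ((1 / 2) ^ k * ‖x‖) := mul_le_mul_of_nonneg_left (hu_norm k) hK
      _ = K * ‖x‖ * (1 / 2) ^ k := by ring
  have hu_lim : Tendsto u atTop (𝓝 0) :=
    squeeze_zero_norm hu_norm (by simpa using (tendsto_pow_atTop_nhds_zero_of_lt_one
      (r := (1 / 2 : ℝ)) (by norm_num) (by norm_num)).mul_const ‖x‖)
  have hpartial : ∀ n, ∑ k ∈ Finset.range n, (y (u k) - z (u k)) = x - u n := fun n => by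
    have hdiff : ∀ k, y (u k) - z (u k) = u k - u (k + 1) := fun k => by
      rw [hu_succ, sub_sub_cancel]
    rw [Finset.sum_congr rfl fun k _ => hdiff k, Finset.sum_range_sub']
    rfl
  rw [mul_assoc]
  refine mem_nonnegClosedBall_sub_of_tendsto_sum (fun k => (hy _).1) (fun k => (hz _).1)
    (fun k => hbound k _ (hy _)) (fun k => hbound k _ (hz _)) ?_
  simp only [hpartial]
  simpa using hu_lim.const_sub x

variable [NormedSpace ℝ X] [PosSMulMono ℝ X]

theorem convex_nonnegClosedBall (r : ℝ) : Convex ℝ (nonnegClosedBall X r) :=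
  (convex_Ici 0).inter (convex_closedBall 0 r)

theorem exists_ball_subset_closure_nonnegClosedBall_sub [CompleteSpace X]
    (hgen : Ici (0 : X) - Ici 0 = univ) :
    ∃ n : ℕ, ∃ r > 0, ball (0 : X) r ⊆
      closure (nonnegClosedBall X (n + 1) - nonnegClosedBall X (n + 1)) := by
  have hcover : ⋃ n : ℕ, closure (nonnegClosedBall X (n + 1) - nonnegClosedBall X (n + 1)) =
      univ := by
    refine eq_univ_of_forall fun x => mem_iUnion.2 ?_
    obtain ⟨y, hy, z, hz, rfl⟩ := hgen.symm ▸ mem_univ x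
    obtain ⟨n, hn⟩ := exists_nat_ge (max ‖y‖ ‖z‖)
    have hyn : ‖y‖ ≤ n + 1 := by linarith [le_max_left ‖y‖ ‖z‖]
    have hzn : ‖z‖ ≤ n + 1 := by linarith [le_max_right ‖y‖ ‖z‖]
    exact ⟨n, subset_closure ⟨y, ⟨hy, mem_closedBall_zero_iff.2 hyn⟩, z,
      ⟨hz, mem_closedBall_zero_iff.2 hzn⟩, rfl⟩⟩
  obtain ⟨n, hn⟩ := nonempty_interior_of_iUnion_of_closed (fun _ => isClosed_closure) hcover
  have hconv :=
    ((convex_nonnegClosedBall (X := X) (n + 1)).sub (convex_nonnegClosedBall (n + 1))).closure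
  have hneg : -closure (nonnegClosedBall X (n + 1) - nonnegClosedBall X (n + 1)) =
      closure (nonnegClosedBall X (n + 1) - nonnegClosedBall X (n + 1)) := by
    rw [neg_closure, neg_sub]
  obtain ⟨r, hr, hball⟩ := Metric.isOpen_iff.1 isOpen_interior 0
    (zero_mem_interior_of_convex_of_neg_eq hconv hneg hn)
  exact ⟨n, r, hr, hball.trans interior_subset⟩

theorem exists_forall_mem_closure_nonnegClosedBall_sub [CompleteSpace X]
    (hgen : Ici (0 : X) - Ici 0 = univ) :
    ∃ K > 0, ∀ u : X,
      u ∈ closure (nonnegClosedBall X (K * ‖u‖) - nonnegClosedBall X (K * ‖u‖)) := by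
  obtain ⟨n, r, hr, hball⟩ := exists_ball_subset_closure_nonnegClosedBall_sub hgen
  refine ⟨2 * (n + 1) / r, by positivity, fun u => ?_⟩
  rcases eq_or_ne u 0 with rfl | hu
  · exact subset_closure (zero_mem_nonnegClosedBall_sub (by simp))
  set t := 2 * ‖u‖ / r with ht_def
  have ht : 0 < t := by positivity
  have hv : t⁻¹ • u ∈ ball (0 : X) r := by
    have hnorm : ‖t⁻¹ • u‖ = r / 2 := by
      rw [norm_smul, norm_inv, Real.norm_of_nonneg ht.le, ht_def]
      field_simp [norm_ne_zero_iff.2 hu]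
    rw [mem_ball_zero_iff, hnorm]
    linarith
  have hu_mem : u ∈ closure (t • (nonnegClosedBall X (n + 1) - nonnegClosedBall X (n + 1))) :=
    smul_closure_subset t _ ⟨t⁻¹ • u, hball hv, smul_inv_smul₀ ht.ne' u⟩
  have htK : t * (n + 1) = 2 * (n + 1) / r * ‖u‖ := by ring
  exact closure_mono (htK ▸ smul_nonnegClosedBall_sub_subset ht.le _) hu_mem

theorem exists_pos_forall_mem_nonnegClosedBall_sub [CompleteSpace X] [OrderClosedTopology X]
    (hgen : Ici (0 : X) - Ici 0 = univ) :
    ∃ C > 0, ∀ x : X, x ∈ nonnegClosedBall X (C * ‖x‖) - nonnegClosedBall X (C * ‖x‖) :=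
  let ⟨K, hK, happrox⟩ := exists_forall_mem_closure_nonnegClosedBall_sub hgen
  ⟨2 * K, by positivity, mem_nonnegClosedBall_sub_of_forall_mem_closure hK.le happrox⟩

end OrderedBanachSpace

/-- Let `X` be an ordered Banach space that is also a vector lattice with
respect to the same order, with a normal (and closed) positive cone. Then
`|||x||| := sup {‖w‖ : 0 ≤ w ≤ |x|}` defines a norm on `X` that is equivalent to the
original norm and is a lattice norm: `|x| ≤ |y|` implies `|||x||| ≤ |||y|||`. -/
theorem stmt5 {X : Type*} [NormedAddCommGroup X] [NormedSpace ℝ X] [CompleteSpace X]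
    [Lattice X] [CovariantClass X X (· + ·) (· ≤ ·)]
    (hclosed : IsClosed {x : X | 0 ≤ x})
    (hsmul : ∀ (a : ℝ) (x : X), 0 ≤ a → 0 ≤ x → 0 ≤ a • x)
    (M : ℝ) (hM : 1 ≤ M)
    (hnormal : ∀ x y : X, 0 ≤ x → x ≤ y → ‖x‖ ≤ M * ‖y‖) :
    ∃ N : X → ℝ,
      (∀ x : X, N x = sSup {r : ℝ | ∃ w : X, 0 ≤ w ∧ w ≤ |x| ∧ r = ‖w‖}) ∧
      N (0 : X) = 0 ∧
      (∀ x : X, N x = 0 → x = 0) ∧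
      (∀ x y : X, N (x + y) ≤ N x + N y) ∧
      (∀ (a : ℝ) (x : X), N (a • x) = |a| * N x) ∧
      (∃ c₁ > (0 : ℝ), ∃ c₂ > (0 : ℝ), ∀ x : X, c₁ * ‖x‖ ≤ N x ∧ N x ≤ c₂ * ‖x‖) ∧
      (∀ x y : X, |x| ≤ |y| → N x ≤ N y) := by
  have : IsOrderedAddMonoid X :=
    { add_le_add_left := fun a b h c => by simpa only [add_comm _ c] using add_le_add_right h c }
  have : PosSMulMono ℝ X := .of_smul_nonneg fun a ha x hx => hsmul a x ha hx
  have : OrderClosedTopology X := orderClosedTopology_of_isClosed_nonneg hclosed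
  obtain ⟨C, hC, hdecomp⟩ := exists_pos_forall_mem_nonnegClosedBall_sub (X := X)
    (eq_univ_of_forall fun x =>
      ⟨x⁺, posPart_nonneg x, x⁻, negPart_nonneg x, posPart_sub_negPart x⟩)
  have hupper : ∀ x : X, latticeNorm x ≤ 2 * M * C * ‖x‖ := fun x => by
    obtain ⟨y, hy, z, hz, hyz⟩ := hdecomp x
    calc latticeNorm x ≤ M * ‖y + z‖ :=
          latticeNorm_le_of_abs_le hnormal (abs_le_add_of_eq_sub hy.1 hz.1 hyz.symm)
      _ ≤ M * (C * ‖x‖ + C * ‖x‖) := mul_le_mul_of_nonneg_left ((norm_add_le y z).trans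
          (add_le_add (mem_closedBall_zero_iff.1 hy.2) (mem_closedBall_zero_iff.1 hz.2)))
          (by linarith)
      _ = 2 * M * C * ‖x‖ := by ring
  refine ⟨latticeNorm, fun x => ?_, latticeNorm_zero,
    fun x => eq_zero_of_latticeNorm_eq_zero hnormal, latticeNorm_add_le hnormal, latticeNorm_smul,
    ⟨1 / 2, by norm_num, 2 * M * C, mul_pos (by linarith) hC,
      fun x => ⟨by linarith [norm_le_two_mul_latticeNorm hnormal x], hupper x⟩⟩,
    fun x y => latticeNorm_mono hnormal⟩
  simp only [latticeNorm, image, mem_Icc, and_assoc, eq_comm]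
end

section
/- Let X be an ordered Banach space with generating cone and Z a Banach lattice. Assume there exist a positive operator J ∈ L(X, Z) and a sequence of positive operators (R_n) ⊆ L(Z, X) such that R_n J → id_X in the weak operator topology. Then for every x' in span(X'_+) ⊆ X', the element x' has a modulus in span(X'_+); consequently span(X'_+) is a vector lattice. -/
open Filter Topology

/-- `f` is a positive functional with respect to the cone `P`. -/
def dualPos {X : Type*} [NormedAddCommGroup X] [NormedSpace ℝ X]
    (P : Set X) (f : X →L[ℝ] ℝ) : Prop := ∀ x ∈ P, 0 ≤ f x

/-- `f` lies in the span `X'₊ - X'₊` of the dual cone. -/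
def inDualSpan {X : Type*} [NormedAddCommGroup X] [NormedSpace ℝ X]
    (P : Set X) (f : X →L[ℝ] ℝ) : Prop :=
  ∃ g, dualPos P g ∧ ∃ h, dualPos P h ∧ f = g - h

/-- The dual order on `X'` induced by the cone `P ⊆ X`. -/
def dualLE {X : Type*} [NormedAddCommGroup X] [NormedSpace ℝ X]
    (P : Set X) (f g : X →L[ℝ] ℝ) : Prop := ∀ x ∈ P, f x ≤ g x

/-!
For `f = g - h` in the span of the dual cone, each functional `f ∘ Rₙ` on the Banach lattice `Z`
has a modulus `|f ∘ Rₙ|` given by the Riesz–Kantorovich formula, and `Tₙ := |f ∘ Rₙ| ∘ J`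
satisfies `|f (Rₙ (J x))| ≤ Tₙ x ≤ u (Rₙ (J x))` on the cone for every upper bound `u` of `±f`.
Taking `u = g + h` and using that the cone is generating, `(Tₙ)` is pointwise bounded, hence
norm bounded by Banach–Steinhaus, so by Banach–Alaoglu it has a weak* limit `m` along an
ultrafilter. Since `Rₙ J → id` weakly, both inequalities pass to the limit: `m` is the least upper
bound of `±f`. The supremum of `f` and `g` is then `(|f - g| + f + g) / 2`.
-/

section RieszDecomposition

variable {Z : Type*} [AddCommGroup Z] [Lattice Z] [IsOrderedAddMonoid Z]

lemma exists_add_of_le_add {y z w : Z} (hy : 0 ≤ y) (hz : 0 ≤ z) (hw0 : 0 ≤ w)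
    (hw : w ≤ y + z) : ∃ u v, 0 ≤ u ∧ u ≤ y ∧ 0 ≤ v ∧ v ≤ z ∧ w = u + v := by
  refine ⟨w ⊓ y, w - w ⊓ y, le_inf hw0 hy, inf_le_right, sub_nonneg.2 inf_le_left, ?_, by abel⟩
  have hsub : w - w ⊓ y = w ⊔ y - y := by
    rw [sub_eq_sub_iff_add_eq_add, add_comm (w ⊔ y), inf_add_sup]
  rw [hsub, sub_le_iff_le_add]
  exact sup_le (hw.trans_eq (add_comm y z)) (le_add_of_nonneg_left hz)

end RieszDecomposition

namespace ContinuousLinearMap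

section RieszKantorovich

variable {Z : Type*} [NormedAddCommGroup Z] [Lattice Z] [NormedSpace ℝ Z]

noncomputable def sSupIcc (φ : Z →L[ℝ] ℝ) (z : Z) : ℝ := sSup (φ '' Set.Icc 0 z)

lemma sSupIcc_le (φ : Z →L[ℝ] ℝ) {z : Z} (hz : 0 ≤ z) {B : ℝ}
    (h : ∀ w, 0 ≤ w → w ≤ z → φ w ≤ B) : sSupIcc φ z ≤ B :=
  csSup_le ⟨φ 0, 0, ⟨le_rfl, hz⟩, rfl⟩ fun _ ⟨w, ⟨hw0, hwz⟩, hw⟩ => hw ▸ h w hw0 hwz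

variable [IsOrderedAddMonoid Z] [HasSolidNorm Z]

lemma apply_le_norm_mul_norm_of_mem_Icc (φ : Z →L[ℝ] ℝ) {w z : Z} (hw0 : 0 ≤ w)
    (hwz : w ≤ z) : φ w ≤ ‖φ‖ * ‖z‖ := by
  have hnorm : ‖w‖ ≤ ‖z‖ := norm_le_norm_of_abs_le_abs <| by
    rw [abs_of_nonneg hw0, abs_of_nonneg (hw0.trans hwz)]
    exact hwz
  calc φ w ≤ ‖φ w‖ := Real.le_norm_self _
    _ ≤ ‖φ‖ * ‖w‖ := φ.le_opNorm w
    _ ≤ ‖φ‖ * ‖z‖ := by gcongr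

lemma apply_le_sSupIcc (φ : Z →L[ℝ] ℝ) {w z : Z} (hw0 : 0 ≤ w) (hwz : w ≤ z) :
    φ w ≤ sSupIcc φ z :=
  le_csSup ⟨‖φ‖ * ‖z‖, fun _ ⟨_, ⟨hv0, hvz⟩, hv⟩ =>
    hv ▸ apply_le_norm_mul_norm_of_mem_Icc φ hv0 hvz⟩ ⟨w, ⟨hw0, hwz⟩, rfl⟩

lemma sSupIcc_nonneg (φ : Z →L[ℝ] ℝ) {z : Z} (hz : 0 ≤ z) : 0 ≤ sSupIcc φ z := by
  simpa using apply_le_sSupIcc φ le_rfl hz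

lemma sSupIcc_le_norm_mul_norm (φ : Z →L[ℝ] ℝ) {z : Z} (hz : 0 ≤ z) :
    sSupIcc φ z ≤ ‖φ‖ * ‖z‖ :=
  sSupIcc_le φ hz fun _ hw0 hwz => apply_le_norm_mul_norm_of_mem_Icc φ hw0 hwz

lemma sSupIcc_zero (φ : Z →L[ℝ] ℝ) : sSupIcc φ 0 = 0 :=
  le_antisymm (sSupIcc_le φ le_rfl fun w hw0 hw => by rw [le_antisymm hw hw0, map_zero])
    (sSupIcc_nonneg φ le_rfl)

lemma sSupIcc_add (φ : Z →L[ℝ] ℝ) {y z : Z} (hy : 0 ≤ y) (hz : 0 ≤ z) :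
    sSupIcc φ (y + z) = sSupIcc φ y + sSupIcc φ z := by
  refine le_antisymm ?_ ?_
  · refine sSupIcc_le φ (add_nonneg hy hz) fun w hw0 hw => ?_
    obtain ⟨u, v, hu0, huy, hv0, hvz, rfl⟩ := exists_add_of_le_add hy hz hw0 hw
    rw [map_add]
    exact add_le_add (apply_le_sSupIcc φ hu0 huy) (apply_le_sSupIcc φ hv0 hvz)
  · rw [← le_sub_iff_add_le]
    refine sSupIcc_le φ hy fun u hu0 huy => ?_
    rw [le_sub_iff_add_le', ← le_sub_iff_add_le]
    refine sSupIcc_le φ hz fun v hv0 hvz => ?_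
    rw [le_sub_iff_add_le, ← map_add]
    exact apply_le_sSupIcc φ (add_nonneg hv0 hu0) (by rw [add_comm y]; exact add_le_add hvz huy)

/-- The Riesz–Kantorovich formula for the positive part of `φ`. -/
noncomputable def posPartFun (φ : Z →L[ℝ] ℝ) (z : Z) : ℝ := sSupIcc φ z⁺ - sSupIcc φ z⁻

lemma posPartFun_eq_of_eq_sub (φ : Z →L[ℝ] ℝ) {u v z : Z} (hu : 0 ≤ u) (hv : 0 ≤ v)
    (hz : z = u - v) : posPartFun φ z = sSupIcc φ u - sSupIcc φ v := by
  have hsplit : z⁺ + v = u + z⁻ :=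
    sub_eq_sub_iff_add_eq_add.mp (by rw [posPart_sub_negPart, hz])
  have := congrArg (sSupIcc φ) hsplit
  rw [sSupIcc_add φ (posPart_nonneg z) hv, sSupIcc_add φ hu (negPart_nonneg z)] at this
  unfold posPartFun
  linarith

lemma posPartFun_add (φ : Z →L[ℝ] ℝ) (a b : Z) :
    posPartFun φ (a + b) = posPartFun φ a + posPartFun φ b := by
  rw [posPartFun_eq_of_eq_sub φ (add_nonneg (posPart_nonneg a) (posPart_nonneg b))
      (add_nonneg (negPart_nonneg a) (negPart_nonneg b))
      (by rw [add_sub_add_comm, posPart_sub_negPart, posPart_sub_negPart]),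
    sSupIcc_add φ (posPart_nonneg a) (posPart_nonneg b),
    sSupIcc_add φ (negPart_nonneg a) (negPart_nonneg b)]
  unfold posPartFun
  ring

lemma norm_posPartFun_le (φ : Z →L[ℝ] ℝ) (z : Z) : ‖posPartFun φ z‖ ≤ 2 * ‖φ‖ * ‖z‖ := by
  have hpos : ‖z⁺‖ ≤ ‖z‖ := norm_le_norm_of_abs_le_abs <| by
    rw [abs_of_nonneg (posPart_nonneg z)]; exact sup_le (le_abs_self z) (abs_nonneg z)
  have hneg : ‖z⁻‖ ≤ ‖z‖ := norm_le_norm_of_abs_le_abs <| by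
    rw [abs_of_nonneg (negPart_nonneg z)]; exact sup_le (neg_le_abs z) (abs_nonneg z)
  have h₁ := sSupIcc_le_norm_mul_norm φ (posPart_nonneg z)
  have h₂ := sSupIcc_le_norm_mul_norm φ (negPart_nonneg z)
  have h₃ := sSupIcc_nonneg φ (posPart_nonneg z)
  have h₄ := sSupIcc_nonneg φ (negPart_nonneg z)
  have : ‖φ‖ * ‖z⁺‖ ≤ ‖φ‖ * ‖z‖ := by gcongr
  have : ‖φ‖ * ‖z⁻‖ ≤ ‖φ‖ * ‖z‖ := by gcongr
  rw [Real.norm_eq_abs, abs_le]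
  constructor <;> · unfold posPartFun; linarith

noncomputable def latticePosPart (φ : Z →L[ℝ] ℝ) : Z →L[ℝ] ℝ :=
  let f : Z →+ ℝ :=
    { toFun := posPartFun φ
      map_zero' := by simp [posPartFun]
      map_add' := posPartFun_add φ }
  f.toRealLinearMap (AddMonoidHomClass.continuous_of_bound f _ (norm_posPartFun_le φ))

lemma latticePosPart_apply_of_nonneg (φ : Z →L[ℝ] ℝ) {z : Z} (hz : 0 ≤ z) :
    latticePosPart φ z = sSupIcc φ z := by
  have h := posPartFun_eq_of_eq_sub φ hz le_rfl (sub_zero z).symm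
  rwa [sSupIcc_zero, sub_zero] at h

noncomputable def latticeAbs (φ : Z →L[ℝ] ℝ) : Z →L[ℝ] ℝ := (2 : ℝ) • latticePosPart φ - φ

lemma latticeAbs_apply_of_nonneg (φ : Z →L[ℝ] ℝ) {z : Z} (hz : 0 ≤ z) :
    latticeAbs φ z = 2 * sSupIcc φ z - φ z := by
  simp [latticeAbs, latticePosPart_apply_of_nonneg φ hz]

lemma apply_le_latticeAbs_apply (φ : Z →L[ℝ] ℝ) {z : Z} (hz : 0 ≤ z) :
    φ z ≤ latticeAbs φ z := by
  linarith [latticeAbs_apply_of_nonneg φ hz, apply_le_sSupIcc φ hz le_rfl]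

lemma neg_apply_le_latticeAbs_apply (φ : Z →L[ℝ] ℝ) {z : Z} (hz : 0 ≤ z) :
    -φ z ≤ latticeAbs φ z := by
  linarith [latticeAbs_apply_of_nonneg φ hz, sSupIcc_nonneg φ hz]

lemma latticeAbs_apply_le (φ ψ : Z →L[ℝ] ℝ) (hle : ∀ w, 0 ≤ w → φ w ≤ ψ w)
    (hneg_le : ∀ w, 0 ≤ w → -φ w ≤ ψ w) {z : Z} (hz : 0 ≤ z) : latticeAbs φ z ≤ ψ z := by
  suffices sSupIcc φ z ≤ (ψ z + φ z) / 2 by linarith [latticeAbs_apply_of_nonneg φ hz]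
  refine sSupIcc_le φ hz fun w hw0 hwz => ?_
  have hzw : 0 ≤ z - w := sub_nonneg.2 hwz
  have hφ : φ z = φ w + φ (z - w) := by rw [← map_add, add_sub_cancel]
  have hψ : ψ z = ψ w + ψ (z - w) := by rw [← map_add, add_sub_cancel]
  linarith [hle w hw0, hneg_le (z - w) hzw]

end RieszKantorovich

end ContinuousLinearMap

lemma StrongDual.exists_forall_tendsto_of_bounded {ι 𝕜 E : Type*} [NontriviallyNormedField 𝕜]
    [ProperSpace 𝕜] [NormedAddCommGroup E] [NormedSpace 𝕜 E] [CompleteSpace E]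
    {T : ι → StrongDual 𝕜 E} (hT : ∀ x, ∃ C, ∀ i, ‖T i x‖ ≤ C) (U : Ultrafilter ι) :
    ∃ m : StrongDual 𝕜 E, ∀ x, Tendsto (fun i => T i x) U (𝓝 (m x)) := by
  obtain ⟨C, hC⟩ := banach_steinhaus hT
  obtain ⟨m, -, hm⟩ := (WeakDual.isCompact_closedBall (0 : StrongDual 𝕜 E) C).ultrafilter_le_nhds
    (U.map fun i => StrongDual.toWeakDual (T i))
    (le_principal_iff.2 <| eventually_map.2 <| .of_forall fun i => by simpa using hC i)
  exact ⟨WeakDual.toStrongDual m, fun x => ((WeakDual.eval_continuous x).tendsto m).comp hm⟩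

section DualOrder

variable {X : Type*} [NormedAddCommGroup X] [NormedSpace ℝ X] {P : Set X}

def IsDualSup (P : Set X) (f g s : X →L[ℝ] ℝ) : Prop :=
  dualLE P f s ∧ dualLE P g s ∧ ∀ u, dualLE P f u → dualLE P g u → dualLE P s u

lemma dualPos.add {f g : X →L[ℝ] ℝ} (hf : dualPos P f) (hg : dualPos P g) :
    dualPos P (f + g) :=
  fun x hx => add_nonneg (hf x hx) (hg x hx)

lemma dualPos.smul {c : ℝ} (hc : 0 ≤ c) {f : X →L[ℝ] ℝ} (hf : dualPos P f) :
    dualPos P (c • f) :=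
  fun x hx => mul_nonneg hc (hf x hx)

lemma dualPos.inDualSpan {f : X →L[ℝ] ℝ} (hf : dualPos P f) : inDualSpan P f :=
  ⟨f, hf, 0, fun _ _ => le_rfl, (sub_zero f).symm⟩

lemma inDualSpan.add {f g : X →L[ℝ] ℝ} (hf : inDualSpan P f) (hg : inDualSpan P g) :
    inDualSpan P (f + g) := by
  obtain ⟨f₁, hf₁, f₂, hf₂, rfl⟩ := hf
  obtain ⟨g₁, hg₁, g₂, hg₂, rfl⟩ := hg
  exact ⟨f₁ + g₁, hf₁.add hg₁, f₂ + g₂, hf₂.add hg₂, by abel⟩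

lemma inDualSpan.sub {f g : X →L[ℝ] ℝ} (hf : inDualSpan P f) (hg : inDualSpan P g) :
    inDualSpan P (f - g) := by
  obtain ⟨f₁, hf₁, f₂, hf₂, rfl⟩ := hf
  obtain ⟨g₁, hg₁, g₂, hg₂, rfl⟩ := hg
  exact ⟨f₁ + g₂, hf₁.add hg₂, f₂ + g₁, hf₂.add hg₁, by abel⟩

lemma inDualSpan.smul {c : ℝ} (hc : 0 ≤ c) {f : X →L[ℝ] ℝ} (hf : inDualSpan P f) :
    inDualSpan P (c • f) := by
  obtain ⟨f₁, hf₁, f₂, hf₂, rfl⟩ := hf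
  exact ⟨c • f₁, hf₁.smul hc, c • f₂, hf₂.smul hc, smul_sub c f₁ f₂⟩

lemma IsDualSup.dualPos_of_neg {f m : X →L[ℝ] ℝ} (hm : IsDualSup P f (-f) m) : dualPos P m :=
  fun x hx => by linarith [hm.1 x hx, hm.2.1 x hx, neg_apply f x]

lemma IsDualSup.half_add_add {f g m : X →L[ℝ] ℝ} (hm : IsDualSup P (f - g) (-(f - g)) m) :
    IsDualSup P f g ((2 : ℝ)⁻¹ • (m + f + g)) := by
  obtain ⟨hle, hneg_le, hleast⟩ := hm
  have hs (x : X) : ((2 : ℝ)⁻¹ • (m + f + g)) x = (m x + f x + g x) / 2 := by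
    simp only [smul_apply, add_apply, smul_eq_mul]; ring
  have hfg (x : X) : (f - g) x = f x - g x := sub_apply f g x
  refine ⟨fun x hx => ?_, fun x hx => ?_, fun u hfu hgu x hx => ?_⟩
  · linarith [hs x, hle x hx, hfg x]
  · linarith [hs x, hneg_le x hx, neg_apply (f - g) x, hfg x]
  · have hv (y : X) : ((2 : ℝ) • u - f - g) y = 2 * u y - f y - g y := by
      simp only [sub_apply, smul_apply, smul_eq_mul]
    have := hleast ((2 : ℝ) • u - f - g)
      (fun y hy => by linarith [hv y, hfg y, hfu y hy, hgu y hy])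
      (fun y hy => by linarith [hv y, hfg y, neg_apply (f - g) y, hfu y hy, hgu y hy]) x hx
    linarith [hs x, hv x]

end DualOrder

section Approximation

variable {X : Type*} [NormedAddCommGroup X] [NormedSpace ℝ X] {P : Set X}
  {S : ℕ → X →L[ℝ] X} {T : ℕ → X →L[ℝ] ℝ} {f : X →L[ℝ] ℝ}

lemma exists_bound_of_abs_le_of_le (hgen : ∀ x : X, ∃ y ∈ P, ∃ z ∈ P, x = y - z)
    (hS : ∀ (x : X) (φ : X →L[ℝ] ℝ), Tendsto (fun n => φ (S n x)) atTop (𝓝 (φ x)))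
    (hf : inDualSpan P f) (habs_le : ∀ n, ∀ x ∈ P, |f (S n x)| ≤ T n x)
    (hle : ∀ u, dualLE P f u → dualLE P (-f) u → ∀ n, ∀ x ∈ P, T n x ≤ u (S n x)) :
    ∀ x, ∃ C, ∀ n, ‖T n x‖ ≤ C := by
  obtain ⟨g, hg, h, hh, rfl⟩ := hf
  have hP : ∀ x ∈ P, ∃ C, ∀ n, ‖T n x‖ ≤ C := by
    intro x hx
    obtain ⟨C, hC⟩ := (hS x (g + h)).bddAbove_range
    refine ⟨C, fun n => ?_⟩
    have hT_nonneg : 0 ≤ T n x := (abs_nonneg _).trans (habs_le n x hx)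
    rw [Real.norm_of_nonneg hT_nonneg]
    refine (hle (g + h) (fun y hy => ?_) (fun y hy => ?_) n x hx).trans (hC ⟨n, rfl⟩)
    · simp only [sub_apply, add_apply]; linarith [hh y hy]
    · simp only [neg_apply, sub_apply, add_apply]; linarith [hg y hy]
  intro x
  obtain ⟨y, hy, z, hz, rfl⟩ := hgen x
  obtain ⟨Cy, hCy⟩ := hP y hy
  obtain ⟨Cz, hCz⟩ := hP z hz
  exact ⟨Cy + Cz, fun n => by
    rw [map_sub]; exact (norm_sub_le _ _).trans (add_le_add (hCy n) (hCz n))⟩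

lemma exists_isDualSup_neg_of_approx [CompleteSpace X]
    (hgen : ∀ x : X, ∃ y ∈ P, ∃ z ∈ P, x = y - z)
    (hS : ∀ (x : X) (φ : X →L[ℝ] ℝ), Tendsto (fun n => φ (S n x)) atTop (𝓝 (φ x)))
    (hf : inDualSpan P f) (habs_le : ∀ n, ∀ x ∈ P, |f (S n x)| ≤ T n x)
    (hle : ∀ u, dualLE P f u → dualLE P (-f) u → ∀ n, ∀ x ∈ P, T n x ≤ u (S n x)) :
    ∃ m, IsDualSup P f (-f) m := by
  let U : Ultrafilter ℕ := .of atTop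
  have hSU (x : X) (φ : X →L[ℝ] ℝ) : Tendsto (fun n => φ (S n x)) U (𝓝 (φ x)) :=
    (hS x φ).mono_left (Ultrafilter.of_le _)
  obtain ⟨m, hm⟩ := StrongDual.exists_forall_tendsto_of_bounded
    (exists_bound_of_abs_le_of_le hgen hS hf habs_le hle) U
  refine ⟨m, fun x hx => ?_, fun x hx => ?_, fun u hfu hnfu x hx => ?_⟩
  · exact le_of_tendsto_of_tendsto' (hSU x f) (hm x) fun n =>
      (le_abs_self _).trans (habs_le n x hx)
  · exact le_of_tendsto_of_tendsto' (hSU x f).neg (hm x) fun n =>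
      (neg_le_abs _).trans (habs_le n x hx)
  · exact le_of_tendsto_of_tendsto' (hm x) (hSU x u) fun n => hle u hfu hnfu n x hx

end Approximation

open ContinuousLinearMap in
lemma exists_isDualSup_neg {X Z : Type*} [NormedAddCommGroup X] [NormedSpace ℝ X]
    [CompleteSpace X] [NormedAddCommGroup Z] [Lattice Z] [IsOrderedAddMonoid Z] [HasSolidNorm Z]
    [NormedSpace ℝ Z] {P : Set X} (hgen : ∀ x : X, ∃ y ∈ P, ∃ z ∈ P, x = y - z)
    {J : X →L[ℝ] Z} (hJ : ∀ x ∈ P, 0 ≤ J x)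
    {R : ℕ → Z →L[ℝ] X} (hR : ∀ n, ∀ z : Z, 0 ≤ z → R n z ∈ P)
    (hWOT : ∀ (x : X) (φ : X →L[ℝ] ℝ), Tendsto (fun n => φ (R n (J x))) atTop (𝓝 (φ x)))
    {f : X →L[ℝ] ℝ} (hf : inDualSpan P f) : ∃ m, IsDualSup P f (-f) m :=
  exists_isDualSup_neg_of_approx (S := fun n => R n ∘L J)
    (T := fun n => latticeAbs (f ∘L R n) ∘L J) hgen hWOT hf
    (fun n x hx => abs_le.2 ⟨neg_le.1 (neg_apply_le_latticeAbs_apply (f ∘L R n) (hJ x hx)),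
      apply_le_latticeAbs_apply (f ∘L R n) (hJ x hx)⟩)
    (fun u hfu hnfu n x hx => latticeAbs_apply_le (f ∘L R n) (u ∘L R n)
      (fun w hw => hfu _ (hR n w hw)) (fun w hw => hnfu _ (hR n w hw)) (hJ x hx))

theorem stmt9_general {X Z : Type*}
    [NormedAddCommGroup X] [NormedSpace ℝ X] [CompleteSpace X]
    [NormedAddCommGroup Z] [Lattice Z] [IsOrderedAddMonoid Z] [HasSolidNorm Z]
    [NormedSpace ℝ Z]
    (P : Set X)
    (hgen : ∀ x : X, ∃ y ∈ P, ∃ z ∈ P, x = y - z)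
    (J : X →L[ℝ] Z) (hJ : ∀ x ∈ P, 0 ≤ J x)
    (R : ℕ → Z →L[ℝ] X) (hR : ∀ n, ∀ z : Z, 0 ≤ z → R n z ∈ P)
    (hWOT : ∀ (x : X) (φ : X →L[ℝ] ℝ),
      Tendsto (fun n => φ (R n (J x))) atTop (𝓝 (φ x))) :
    (∀ f : X →L[ℝ] ℝ, inDualSpan P f →
      ∃ m : X →L[ℝ] ℝ, dualPos P m ∧ dualLE P f m ∧ dualLE P (-f) m ∧
        ∀ u : X →L[ℝ] ℝ, inDualSpan P u → dualLE P f u → dualLE P (-f) u →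
          dualLE P m u) ∧
    (∀ f g : X →L[ℝ] ℝ, inDualSpan P f → inDualSpan P g →
      ∃ s : X →L[ℝ] ℝ, inDualSpan P s ∧ dualLE P f s ∧ dualLE P g s ∧
        ∀ u : X →L[ℝ] ℝ, inDualSpan P u → dualLE P f u → dualLE P g u →
          dualLE P s u) := by
  refine ⟨fun f hf => ?_, fun f g hf hg => ?_⟩
  · obtain ⟨m, hm⟩ := exists_isDualSup_neg hgen hJ hR hWOT hf
    exact ⟨m, hm.dualPos_of_neg, hm.1, hm.2.1, fun u _ => hm.2.2 u⟩
  · obtain ⟨m, hm⟩ := exists_isDualSup_neg hgen hJ hR hWOT (hf.sub hg)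
    have hsup := hm.half_add_add
    exact ⟨_, ((hm.dualPos_of_neg.inDualSpan.add hf).add hg).smul (by norm_num), hsup.1,
      hsup.2.1, fun u _ => hsup.2.2 u⟩

/-- Let `X` be an ordered Banach space with generating (closed) cone `P` and
`Z` a Banach lattice. Assume there are a positive operator `J : X → Z` and positive
operators `Rₙ : Z → X` with `Rₙ J → id_X` in the weak operator topology. Then every
`f ∈ span(X'₊)` has a modulus (a supremum of `f` and `-f`) in `span(X'₊)`; consequently
any two elements of `span(X'₊)` have a supremum therein, i.e. `span(X'₊)` is a vector
lattice. -/
theorem stmt9 {X Z : Type*}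
    [NormedAddCommGroup X] [NormedSpace ℝ X] [CompleteSpace X]
    [NormedAddCommGroup Z] [Lattice Z] [IsOrderedAddMonoid Z] [HasSolidNorm Z]
    [NormedSpace ℝ Z] [CompleteSpace Z]
    (P : Set X) (hPclosed : IsClosed P)
    (hPadd : ∀ x ∈ P, ∀ y ∈ P, x + y ∈ P)
    (hPsmul : ∀ (a : ℝ), 0 ≤ a → ∀ x ∈ P, a • x ∈ P)
    (hPpointed : ∀ x ∈ P, -x ∈ P → x = 0)
    (hgen : ∀ x : X, ∃ y ∈ P, ∃ z ∈ P, x = y - z)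
    (J : X →L[ℝ] Z) (hJ : ∀ x ∈ P, 0 ≤ J x)
    (R : ℕ → Z →L[ℝ] X) (hR : ∀ n, ∀ z : Z, 0 ≤ z → R n z ∈ P)
    (hWOT : ∀ (x : X) (φ : X →L[ℝ] ℝ),
      Tendsto (fun n => φ (R n (J x))) atTop (𝓝 (φ x))) :
    (∀ f : X →L[ℝ] ℝ, inDualSpan P f →
      ∃ m : X →L[ℝ] ℝ, dualPos P m ∧ dualLE P f m ∧ dualLE P (-f) m ∧
        ∀ u : X →L[ℝ] ℝ, inDualSpan P u → dualLE P f u → dualLE P (-f) u →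
          dualLE P m u) ∧
    (∀ f g : X →L[ℝ] ℝ, inDualSpan P f → inDualSpan P g →
      ∃ s : X →L[ℝ] ℝ, inDualSpan P s ∧ dualLE P f s ∧ dualLE P g s ∧
        ∀ u : X →L[ℝ] ℝ, inDualSpan P u → dualLE P f u → dualLE P g u →
          dualLE P s u) :=
  stmt9_general P hgen J hJ R hR hWOT
end

section
/- Let X be a reflexive ordered Banach space with generating cone, Z a Banach lattice, J ∈ L(X, Z) positive, and (R_n) ⊆ L(Z, X) positive with R_n J → id_X in the weak operator topology. Then span(X'_+), equipped with an equivalent norm, is a KB-space: every increasing norm-bounded net in its positive cone is norm-convergent. -/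
/-!
By the open mapping theorem applied to the summation map `ℓ¹(C ∩ B₁) → X`, a closed generating
cone `C` of a Banach space is boundedly generating (Andô): `x = y - z` with `y, z ∈ C` and
`‖y‖ + ‖z‖ ≤ M ‖x‖`.

Lattice property: for `f = g - h` with `g, h ≥ 0`, the Riesz–Kantorovich modulus of `f ∘ Rₙ` on
the lattice `Z`, evaluated at `J x`, is additive in `x ∈ C`, dominates `|f (Rₙ (J x))|` and is
dominated by `u (Rₙ (J x))` for every upper bound `u` of `±f`. A limit along an ultrafilter as
`n → ∞` keeps these properties, and bounded generation extends the resulting additive function on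
`C` to a positive functional: the modulus `|f|` in the dual order.

KB property: an increasing bounded net `gᵢ` of positive functionals converges pointwise to some
`s`. By weak compactness of the unit ball of the reflexive space `X`, the decreasing functionals
`s - gᵢ` tend to `0` uniformly on `C ∩ B₁` (a Dini-type argument), and for positive functionals
bounded generation turns this into convergence in norm.
-/

open Filter Topology

/-- The span norm on `span(X'₊)`. -/
noncomputable def dualSpanNorm {X : Type*} [NormedAddCommGroup X] [NormedSpace ℝ X]
    (P : Set X) (f : X →L[ℝ] ℝ) : ℝ :=
  sInf {r : ℝ | ∃ g, dualPos P g ∧ ∃ h, dualPos P h ∧ f = g - h ∧ r = ‖g‖ + ‖h‖}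

open scoped lp

section ConeDecomposition

theorem tsum_mem_of_isClosed {S M ι : Type*} [AddCommMonoid M] [TopologicalSpace M] [SetLike S M]
    [AddSubmonoidClass S M] {s : S} (hs : IsClosed (s : Set M)) {f : ι → M} (hf : ∀ i, f i ∈ s) :
    ∑' i, f i ∈ s := by
  by_cases hsum : Summable f
  · exact hs.mem_of_tendsto hsum.hasSum (.of_forall fun t => sum_mem fun i _ => hf i)
  · rw [tsum_eq_zero_of_not_summable hsum]
    exact zero_mem s

variable {X : Type*} [NormedAddCommGroup X] [NormedSpace ℝ X]

def PointedCone.IsBoundedlyGenerating (C : PointedCone ℝ X) (M : ℝ) : Prop :=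
  ∀ x, ∃ y ∈ C, ∃ z ∈ C, x = y - z ∧ ‖y‖ + ‖z‖ ≤ M * ‖x‖

theorem PointedCone.IsBoundedlyGenerating.exists_eq_sub {C : PointedCone ℝ X} {M : ℝ}
    (hC : C.IsBoundedlyGenerating M) (x : X) : ∃ y ∈ C, ∃ z ∈ C, x = y - z :=
  let ⟨y, hy, z, hz, hyz, _⟩ := hC x
  ⟨y, hy, z, hz, hyz⟩

variable {ι : Type*}

theorem lp.summable_abs_of_one (a : ℓ¹(ι, ℝ)) : Summable fun i => |a i| := by
  simpa using (lp.memℓp a).summable (by norm_num)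

theorem lp.norm_eq_tsum_abs_of_one (a : ℓ¹(ι, ℝ)) : ‖a‖ = ∑' i, |a i| := by
  simp [lp.norm_eq_tsum_rpow (by norm_num : 0 < (1 : ENNReal).toReal)]

variable {v : ι → X}

theorem summable_smul_of_norm_le_one [CompleteSpace X] (hv : ∀ i, ‖v i‖ ≤ 1) {c : ι → ℝ}
    (hc : Summable fun i => |c i|) : Summable fun i => c i • v i :=
  hc.of_norm_bounded fun i => by
    simpa [norm_smul] using mul_le_of_le_one_right (abs_nonneg (c i)) (hv i)

theorem norm_tsum_smul_le (hv : ∀ i, ‖v i‖ ≤ 1) {c : ι → ℝ} (hc : Summable fun i => |c i|) :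
    ‖∑' i, c i • v i‖ ≤ ∑' i, |c i| :=
  tsum_of_norm_bounded hc.hasSum fun i => by
    simpa [norm_smul] using mul_le_of_le_one_right (abs_nonneg (c i)) (hv i)

noncomputable def lpOneCombination [CompleteSpace X] (v : ι → X) (hv : ∀ i, ‖v i‖ ≤ 1) :
    ℓ¹(ι, ℝ) →L[ℝ] X :=
  LinearMap.mkContinuous
    { toFun a := ∑' i, a i • v i
      map_add' a b := by
        simp only [lp.coeFn_add, Pi.add_apply, add_smul]
        exact (summable_smul_of_norm_le_one hv (lp.summable_abs_of_one a)).tsum_add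
          (summable_smul_of_norm_le_one hv (lp.summable_abs_of_one b))
      map_smul' t a := by
        simp only [lp.coeFn_smul, Pi.smul_apply, smul_eq_mul, mul_smul, RingHom.id_apply]
        exact (summable_smul_of_norm_le_one hv (lp.summable_abs_of_one a)).tsum_const_smul t }
    1 fun a => by
      simpa [lp.norm_eq_tsum_abs_of_one a] using norm_tsum_smul_le hv (lp.summable_abs_of_one a)

variable [CompleteSpace X]

theorem lpOneCombination_apply (hv : ∀ i, ‖v i‖ ≤ 1) (a : ℓ¹(ι, ℝ)) :
    lpOneCombination v hv a = ∑' i, a i • v i := rfl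

theorem lpOneCombination_single [DecidableEq ι] (hv : ∀ i, ‖v i‖ ≤ 1) (i : ι) (t : ℝ) :
    lpOneCombination v hv (lp.single 1 i t) = t • v i := by
  rw [lpOneCombination_apply,
    tsum_eq_single i fun j hj => by simp [lp.single_apply, Pi.single_eq_of_ne hj]]
  simp

theorem exists_lpOneCombination_eq_sub {C : PointedCone ℝ X} (hC : IsClosed (C : Set X))
    (hv : ∀ i, ‖v i‖ ≤ 1) (hvC : ∀ i, v i ∈ C) (a : ℓ¹(ι, ℝ)) :
    ∃ y ∈ C, ∃ z ∈ C, lpOneCombination v hv a = y - z ∧ ‖y‖ + ‖z‖ ≤ ‖a‖ := by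
  have habs := lp.summable_abs_of_one a
  have hpos : Summable fun i => |(a i)⁺| :=
    habs.of_nonneg_of_le (fun _ => abs_nonneg _) fun i => by
      rw [abs_of_nonneg (posPart_nonneg _), ← posPart_add_negPart]
      exact le_add_of_nonneg_right (negPart_nonneg _)
  have hneg : Summable fun i => |(a i)⁻| :=
    habs.of_nonneg_of_le (fun _ => abs_nonneg _) fun i => by
      rw [abs_of_nonneg (negPart_nonneg _), ← posPart_add_negPart]
      exact le_add_of_nonneg_left (posPart_nonneg _)
  refine ⟨∑' i, (a i)⁺ • v i,
    tsum_mem_of_isClosed hC fun i => C.smul_mem (posPart_nonneg _) (hvC i),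
    ∑' i, (a i)⁻ • v i, tsum_mem_of_isClosed hC fun i => C.smul_mem (negPart_nonneg _) (hvC i),
    ?_, ?_⟩
  · rw [lpOneCombination_apply, ← (summable_smul_of_norm_le_one hv hpos).tsum_sub
      (summable_smul_of_norm_le_one hv hneg)]
    simp_rw [← sub_smul, posPart_sub_negPart]
  · calc _ ≤ ∑' i, |(a i)⁺| + ∑' i, |(a i)⁻| :=
          add_le_add (norm_tsum_smul_le hv hpos) (norm_tsum_smul_le hv hneg)
      _ = ‖a‖ := by
        rw [← hpos.tsum_add hneg, lp.norm_eq_tsum_abs_of_one a]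
        simp_rw [abs_of_nonneg (posPart_nonneg _), abs_of_nonneg (negPart_nonneg _),
          posPart_add_negPart]

theorem PointedCone.exists_isBoundedlyGenerating {C : PointedCone ℝ X}
    (hC : IsClosed (C : Set X)) (hgen : ∀ x, ∃ y ∈ C, ∃ z ∈ C, x = y - z) :
    ∃ M > 0, C.IsBoundedlyGenerating M := by
  classical
  let ι := {p : X // p ∈ C ∧ ‖p‖ ≤ 1}
  have hv : ∀ p : ι, ‖(p : X)‖ ≤ 1 := fun p => p.2.2
  let T := lpOneCombination (fun p : ι => (p : X)) hv
  have hT : ∀ y ∈ C, ∃ a, T a = y := by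
    intro y hy
    rcases eq_or_ne y 0 with rfl | hy0
    · exact ⟨0, map_zero T⟩
    have hy' : ‖y‖ ≠ 0 := norm_ne_zero_iff.2 hy0
    refine ⟨lp.single 1 ⟨‖y‖⁻¹ • y, C.smul_mem (by positivity) hy, ?_⟩ ‖y‖, ?_⟩
    · simp [norm_smul, hy']
    · simp [T, lpOneCombination_single, smul_inv_smul₀ hy']
  obtain ⟨M, hM, hTM⟩ := T.exists_preimage_norm_le fun x => by
    obtain ⟨y, hy, z, hz, rfl⟩ := hgen x
    obtain ⟨a, rfl⟩ := hT y hy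
    obtain ⟨b, rfl⟩ := hT z hz
    exact ⟨a - b, map_sub T a b⟩
  refine ⟨M, hM, fun x => ?_⟩
  obtain ⟨a, rfl, ha⟩ := hTM x
  obtain ⟨y, hy, z, hz, hyz, hnorm⟩ := exists_lpOneCombination_eq_sub hC hv (fun p => p.2.1) a
  exact ⟨y, hy, z, hz, hyz, hnorm.trans ha⟩

end ConeDecomposition

section RieszModulus

variable {Z : Type*} [Lattice Z] [AddCommGroup Z] [IsOrderedAddMonoid Z]

theorem exists_add_eq_of_abs_le_add {w a b : Z} (ha : 0 ≤ a) (hb : 0 ≤ b) (h : |w| ≤ a + b) :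
    ∃ w₁ w₂, w = w₁ + w₂ ∧ |w₁| ≤ a ∧ |w₂| ≤ b := by
  have hw : w ≤ a + b := (le_abs_self w).trans h
  have hw' : -w ≤ a + b := (neg_le_abs w).trans h
  refine ⟨(w ⊔ -a) ⊓ a, w - (w ⊔ -a) ⊓ a, by abel, abs_le'.2 ⟨inf_le_right, ?_⟩,
    abs_le'.2 ⟨?_, ?_⟩⟩
  · rw [neg_le]
    exact le_inf le_sup_right (neg_le_self ha)
  · rw [sub_le_iff_le_add', ← sub_le_iff_le_add]
    exact le_inf ((sub_le_self w hb).trans le_sup_left) (sub_le_iff_le_add.2 hw)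
  · rw [neg_sub, sub_le_iff_le_add]
    refine inf_le_left.trans (sup_le (le_add_of_nonneg_left hb) ?_)
    rw [neg_le, neg_add, neg_add_eq_sub, sub_le_iff_le_add]
    exact hw'

noncomputable def rieszModulus (φ : Z →+ ℝ) (z : Z) : ℝ :=
  sSup (φ '' {w | |w| ≤ z})

variable {φ u : Z →+ ℝ} {w z z₁ z₂ : Z}

theorem apply_le_of_abs_le (hu : ∀ w, 0 ≤ w → |φ w| ≤ u w) (h : |w| ≤ z) : φ w ≤ u z := by
  have hsub : 0 ≤ z - w := sub_nonneg.2 ((le_abs_self w).trans h)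
  have hadd : 0 ≤ z + w := by
    rw [← neg_le_iff_add_nonneg]
    exact (neg_le_abs w).trans h
  have h₁ := (le_abs_self _).trans (hu _ hadd)
  have h₂ := (neg_le_abs _).trans (hu _ hsub)
  simp only [map_add, map_sub] at h₁ h₂
  linarith

theorem le_rieszModulus (hu : ∀ w, 0 ≤ w → |φ w| ≤ u w) (h : |w| ≤ z) :
    φ w ≤ rieszModulus φ z :=
  le_csSup ⟨u z, by rintro _ ⟨w, hw, rfl⟩; exact apply_le_of_abs_le hu hw⟩ ⟨w, h, rfl⟩

theorem rieszModulus_le_of_forall_le {c : ℝ} (hz : 0 ≤ z) (h : ∀ w, |w| ≤ z → φ w ≤ c) :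
    rieszModulus φ z ≤ c :=
  csSup_le ⟨φ 0, 0, by simpa using hz, rfl⟩ (by rintro _ ⟨w, hw, rfl⟩; exact h w hw)

theorem rieszModulus_le (hu : ∀ w, 0 ≤ w → |φ w| ≤ u w) (hz : 0 ≤ z) : rieszModulus φ z ≤ u z :=
  rieszModulus_le_of_forall_le hz fun _ => apply_le_of_abs_le hu

theorem abs_le_rieszModulus (hu : ∀ w, 0 ≤ w → |φ w| ≤ u w) (hz : 0 ≤ z) :
    |φ z| ≤ rieszModulus φ z := by
  refine abs_le'.2 ⟨le_rieszModulus hu (abs_of_nonneg hz).le, ?_⟩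
  rw [← map_neg]
  exact le_rieszModulus hu (by rw [abs_neg, abs_of_nonneg hz])

theorem rieszModulus_add (hu : ∀ w, 0 ≤ w → |φ w| ≤ u w) (hz₁ : 0 ≤ z₁) (hz₂ : 0 ≤ z₂) :
    rieszModulus φ (z₁ + z₂) = rieszModulus φ z₁ + rieszModulus φ z₂ := by
  refine le_antisymm (rieszModulus_le_of_forall_le (add_nonneg hz₁ hz₂) fun w hw => ?_) ?_
  · obtain ⟨w₁, w₂, rfl, h₁, h₂⟩ := exists_add_eq_of_abs_le_add hz₁ hz₂ hw
    rw [map_add]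
    exact add_le_add (le_rieszModulus hu h₁) (le_rieszModulus hu h₂)
  · rw [← le_sub_iff_add_le]
    refine rieszModulus_le_of_forall_le hz₁ fun w₁ h₁ => ?_
    rw [le_sub_comm]
    refine rieszModulus_le_of_forall_le hz₂ fun w₂ h₂ => ?_
    rw [le_sub_iff_add_le', ← map_add]
    exact le_rieszModulus hu ((abs_add_le w₁ w₂).trans (add_le_add h₁ h₂))

end RieszModulus

section DualCone

variable {X : Type*} [NormedAddCommGroup X] [NormedSpace ℝ X] {C : PointedCone ℝ X} {M : ℝ}

theorem abs_apply_le_of_dualLE {f u : X →L[ℝ] ℝ} (h₁ : dualLE C f u) (h₂ : dualLE C (-f) u)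
    {x : X} (hx : x ∈ C) : |f x| ≤ u x :=
  abs_le'.2 ⟨h₁ x hx, h₂ x hx⟩

theorem exists_continuousLinearMap_eq_of_additive_on_cone
    (hdec : C.IsBoundedlyGenerating M) {L : X → ℝ}
    (hadd : ∀ x ∈ C, ∀ y ∈ C, L (x + y) = L x + L y) (hL : ∀ x ∈ C, 0 ≤ L x)
    (ψ : X →L[ℝ] ℝ) (hLψ : ∀ x ∈ C, L x ≤ ψ x) :
    ∃ m : X →L[ℝ] ℝ, ∀ x ∈ C, m x = L x := by
  choose y hy z hz hyz hnorm using hdec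
  have hsub : ∀ a ∈ C, ∀ b ∈ C, ∀ a' ∈ C, ∀ b' ∈ C, a - b = a' - b' →
      L a - L b = L a' - L b' := by
    intro a ha b hb a' ha' b' hb' h
    have := congrArg L (sub_eq_sub_iff_add_eq_add.1 h)
    rw [hadd a ha b' hb', hadd a' ha' b hb] at this
    linarith
  let μ : X →+ ℝ := AddMonoidHom.mk' (fun x => L (y x) - L (z x)) fun a b => by
    rw [hsub _ (hy (a + b)) _ (hz (a + b)) (y a + y b) (C.add_mem (hy a) (hy b))
      (z a + z b) (C.add_mem (hz a) (hz b))
      (by rw [← hyz (a + b), add_sub_add_comm, ← hyz a, ← hyz b]),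
      hadd _ (hy a) _ (hy b), hadd _ (hz a) _ (hz b)]
    ring
  have hμ : ∀ x, ‖μ x‖ ≤ (‖ψ‖ * M) * ‖x‖ := fun x => by
    have hψ : ∀ v, ψ v ≤ ‖ψ‖ * ‖v‖ := fun v => (le_abs_self _).trans (ψ.le_opNorm v)
    have := mul_le_mul_of_nonneg_left (hnorm x) (norm_nonneg ψ)
    rw [Real.norm_eq_abs, abs_le]
    constructor <;> nlinarith [hL _ (hy x), hL _ (hz x), hLψ _ (hy x), hLψ _ (hz x),
      hψ (y x), hψ (z x), show μ x = L (y x) - L (z x) from rfl]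
  have hL0 : L 0 = 0 := by simpa using hadd 0 C.zero_mem 0 C.zero_mem
  refine ⟨μ.toRealLinearMap (AddMonoidHomClass.continuous_of_bound μ _ hμ), fun x hx => ?_⟩
  show L (y x) - L (z x) = L x
  rw [hsub _ (hy x) _ (hz x) x hx 0 C.zero_mem (by rw [← hyz, sub_zero]), hL0, sub_zero]

theorem exists_tendsto_of_forall_mem_Icc {α : Type*} (W : Ultrafilter α) {a : α → ℝ} {c d : ℝ}
    (h : ∀ i, a i ∈ Set.Icc c d) : ∃ l, Tendsto a W (𝓝 l) := by
  obtain ⟨l, -, hl⟩ := isCompact_Icc.ultrafilter_le_nhds (W.map a) <| by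
    rw [le_principal_iff, Ultrafilter.mem_coe, Ultrafilter.mem_map]
    exact univ_mem' h
  exact ⟨l, hl⟩

theorem exists_modulus_on_cone {Z : Type*} [Lattice Z] [AddCommGroup Z] [IsOrderedAddMonoid Z]
    (J : X →+ Z) (hJ : ∀ x ∈ C, 0 ≤ J x) (R : ℕ → Z →+ X) (hR : ∀ n z, 0 ≤ z → R n z ∈ C)
    (hWOT : ∀ (x : X) (φ : X →L[ℝ] ℝ), Tendsto (fun n => φ (R n (J x))) atTop (𝓝 (φ x)))
    {f ψ : X →L[ℝ] ℝ} (hψ₁ : dualLE C f ψ) (hψ₂ : dualLE C (-f) ψ) :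
    ∃ L : X → ℝ, (∀ x ∈ C, ∀ y ∈ C, L (x + y) = L x + L y) ∧ (∀ x ∈ C, |f x| ≤ L x) ∧
      ∀ u : X →L[ℝ] ℝ, dualLE C f u → dualLE C (-f) u → ∀ x ∈ C, L x ≤ u x := by
  let φ (n : ℕ) : Z →+ ℝ := (f : X →+ ℝ).comp (R n)
  have hdom : ∀ u : X →L[ℝ] ℝ, dualLE C f u → dualLE C (-f) u →
      ∀ n w, 0 ≤ w → |φ n w| ≤ ((u : X →+ ℝ).comp (R n)) w :=
    fun u h₁ h₂ n w hw => abs_apply_le_of_dualLE h₁ h₂ (hR n w hw)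
  let q (n : ℕ) (x : X) : ℝ := rieszModulus (φ n) (J x)
  -- `q n x` is only bounded in `n`; limits along an ultrafilter still respect `+` and `≤`.
  let W := Ultrafilter.of (atTop : Filter ℕ)
  have hW : (W : Filter ℕ) ≤ atTop := Ultrafilter.of_le _
  have hlim : ∀ x, ∃ l, x ∈ C → Tendsto (fun n => q n x) W (𝓝 l) := by
    intro x
    by_cases hx : x ∈ C
    · obtain ⟨B, hB⟩ := (hWOT x ψ).bddAbove_range
      obtain ⟨l, hl⟩ := exists_tendsto_of_forall_mem_Icc W (a := fun n => q n x) fun n =>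
        ⟨(abs_nonneg _).trans (abs_le_rieszModulus (hdom ψ hψ₁ hψ₂ n) (hJ x hx)),
          (rieszModulus_le (hdom ψ hψ₁ hψ₂ n) (hJ x hx)).trans (hB ⟨n, rfl⟩)⟩
      exact ⟨l, fun _ => hl⟩
    · exact ⟨0, fun h => absurd h hx⟩
  choose L hL using hlim
  refine ⟨L, fun x hx y hy => ?_, fun x hx => ?_, fun u h₁ h₂ x hx => ?_⟩
  · refine tendsto_nhds_unique (hL _ (C.add_mem hx hy)) <|
      ((hL x hx).add (hL y hy)).congr fun n => ?_
    simp only [q, map_add]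
    exact (rieszModulus_add (hdom ψ hψ₁ hψ₂ n) (hJ x hx) (hJ y hy)).symm
  · exact le_of_tendsto_of_tendsto' ((hWOT x f).mono_left hW).abs (hL x hx)
      fun n => abs_le_rieszModulus (hdom ψ hψ₁ hψ₂ n) (hJ x hx)
  · exact le_of_tendsto_of_tendsto' (hL x hx) ((hWOT x u).mono_left hW)
      fun n => rieszModulus_le (hdom u h₁ h₂ n) (hJ x hx)

theorem exists_modulus_of_inDualSpan {Z : Type*} [Lattice Z] [AddCommGroup Z]
    [IsOrderedAddMonoid Z] (hdec : C.IsBoundedlyGenerating M)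
    (J : X →+ Z) (hJ : ∀ x ∈ C, 0 ≤ J x) (R : ℕ → Z →+ X) (hR : ∀ n z, 0 ≤ z → R n z ∈ C)
    (hWOT : ∀ (x : X) (φ : X →L[ℝ] ℝ), Tendsto (fun n => φ (R n (J x))) atTop (𝓝 (φ x)))
    {f : X →L[ℝ] ℝ} (hf : inDualSpan C f) :
    ∃ m : X →L[ℝ] ℝ, dualPos C m ∧ dualLE C f m ∧ dualLE C (-f) m ∧
      ∀ u : X →L[ℝ] ℝ, dualLE C f u → dualLE C (-f) u → dualLE C m u := by
  obtain ⟨g, hg, h, hh, rfl⟩ := hf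
  have hψ₁ : dualLE C (g - h) (g + h) := fun x hx => by simp; linarith [hh x hx]
  have hψ₂ : dualLE C (-(g - h)) (g + h) := fun x hx => by simp; linarith [hg x hx]
  obtain ⟨L, hL_add, hL_ge, hL_le⟩ := exists_modulus_on_cone J hJ R hR hWOT hψ₁ hψ₂
  have hL_nonneg : ∀ x ∈ C, 0 ≤ L x := fun x hx => (abs_nonneg _).trans (hL_ge x hx)
  obtain ⟨m, hm⟩ := exists_continuousLinearMap_eq_of_additive_on_cone hdec hL_add hL_nonneg
    (g + h) (hL_le _ hψ₁ hψ₂)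
  refine ⟨m, fun x hx => ?_, fun x hx => ?_, fun x hx => ?_, fun u h₁ h₂ x hx => ?_⟩ <;>
    rw [hm x hx]
  · exact hL_nonneg x hx
  · exact (le_abs_self _).trans (hL_ge x hx)
  · exact (neg_le_abs _).trans (hL_ge x hx)
  · exact hL_le u h₁ h₂ x hx

end DualCone

section Reflexive

variable {X : Type*} [NormedAddCommGroup X] [NormedSpace ℝ X]

open NormedSpace in
theorem exists_forall_tendsto_of_surjective_inclusionInDoubleDual
    (hrefl : Function.Surjective (inclusionInDoubleDual ℝ X)) {α : Type*} (U : Ultrafilter α)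
    {x : α → X} {r : ℝ} (hx : ∀ a, ‖x a‖ ≤ r) :
    ∃ x₀ : X, ∀ φ : X →L[ℝ] ℝ, Tendsto (fun a => φ (x a)) U (𝓝 (φ x₀)) := by
  let S : Set (WeakSpace ℝ X) := toWeakSpace ℝ X '' Metric.closedBall 0 r
  have hS : IsCompact (closure S) := by
    refine isCompact_closure_of_isBounded ℝ X S ?_ fun Φ _ => ?_
    · rw [Set.preimage_image_eq _ (toWeakSpace ℝ X).injective]
      exact Metric.isBounded_closedBall
    · obtain ⟨x₀, hx₀⟩ := hrefl (WeakDual.toStrongDual Φ)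
      exact ⟨x₀, congrArg StrongDual.toWeakDual hx₀⟩
  obtain ⟨x₀, -, hx₀⟩ := hS.ultrafilter_le_nhds (U.map (toWeakSpace ℝ X ∘ x)) <| by
    rw [le_principal_iff, Ultrafilter.mem_coe, Ultrafilter.mem_map]
    exact univ_mem' fun a => subset_closure ⟨x a, by simpa using hx a, rfl⟩
  exact ⟨x₀, fun φ => ((WeakBilin.eval_continuous _ φ).tendsto x₀).comp hx₀⟩

theorem eventually_forall_lt_of_antitone {ι : Type*} [Nonempty ι] [SemilatticeSup ι]
    (hrefl : Function.Surjective (NormedSpace.inclusionInDoubleDual ℝ X)) {S : Set X}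
    {h : ι → X →L[ℝ] ℝ} (hanti : ∀ i j, i ≤ j → ∀ x ∈ S, h j x ≤ h i x)
    (hlim : ∀ x, Tendsto (fun i => h i x) atTop (𝓝 0)) {ε : ℝ} (hε : 0 < ε) :
    ∀ᶠ i in atTop, ∀ x ∈ S, ‖x‖ ≤ 1 → h i x < ε := by
  by_contra hcon
  have hbig : ∀ i, ∃ x ∈ S, ‖x‖ ≤ 1 ∧ ε ≤ h i x := by
    intro i
    obtain ⟨j, hij, hj⟩ := frequently_atTop.1 (not_eventually.1 hcon) i
    push Not at hj
    obtain ⟨x, hx, hx₁, hjx⟩ := hj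
    exact ⟨x, hx, hx₁, hjx.trans (hanti i j hij x hx)⟩
  choose x hxS hx₁ hεx using hbig
  obtain ⟨x₀, hx₀⟩ := exists_forall_tendsto_of_surjective_inclusionInDoubleDual hrefl
    (Ultrafilter.of atTop) hx₁
  have hge : ∀ j, ε ≤ h j x₀ := fun j =>
    ge_of_tendsto (hx₀ (h j)) <| Ultrafilter.of_le _ <|
      (eventually_ge_atTop j).mono fun i hji => (hεx i).trans (hanti j i hji _ (hxS i))
  obtain ⟨j, hj⟩ := ((hlim x₀).eventually (gt_mem_nhds hε)).exists
  exact (hge j).not_gt hj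

end Reflexive

section KB

variable {X : Type*} [NormedAddCommGroup X] [NormedSpace ℝ X] {C : PointedCone ℝ X} {M : ℝ}

theorem norm_le_of_dualPos (hM : 0 ≤ M)
    (hdec : C.IsBoundedlyGenerating M) {φ : X →L[ℝ] ℝ}
    (hφ : dualPos C φ) {c : ℝ} (hc : 0 ≤ c) (hφc : ∀ x ∈ C, ‖x‖ ≤ 1 → φ x ≤ c) :
    ‖φ‖ ≤ M * c := by
  have hhom : ∀ y ∈ C, φ y ≤ c * ‖y‖ := by
    intro y hy
    rcases eq_or_ne y 0 with rfl | hy0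
    · simp
    have hpos : 0 < ‖y‖ := norm_pos_iff.2 hy0
    have := hφc (‖y‖⁻¹ • y) (C.smul_mem (by positivity) hy) (by simp [norm_smul, hpos.ne'])
    rwa [map_smul, smul_eq_mul, inv_mul_le_iff₀ hpos, mul_comm] at this
  refine φ.opNorm_le_bound (by positivity) fun x => ?_
  obtain ⟨y, hy, z, hz, rfl, hyz⟩ := hdec x
  have := mul_le_mul_of_nonneg_left hyz hc
  rw [map_sub, Real.norm_eq_abs, abs_sub_le_iff]
  constructor <;> nlinarith [hφ y hy, hφ z hz, hhom y hy, hhom z hz, norm_nonneg y, norm_nonneg z]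

theorem exists_tendsto_apply_of_monotone {ι : Type*} [Nonempty ι] [SemilatticeSup ι]
    (hgen : ∀ x, ∃ y ∈ C, ∃ z ∈ C, x = y - z) {g : ι → X →L[ℝ] ℝ}
    (hmono : ∀ i j, i ≤ j → dualLE C (g i) (g j)) {b : ℝ} (hb : ∀ i, ‖g i‖ ≤ b) :
    ∃ s : X →L[ℝ] ℝ, ∀ x, Tendsto (fun i => g i x) atTop (𝓝 (s x)) := by
  have hbound : ∀ i x, ‖g i x‖ ≤ b * ‖x‖ := fun i x =>
    ((g i).le_opNorm x).trans (by gcongr; exact hb i)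
  have hcone : ∀ x ∈ C, ∃ l, Tendsto (fun i => g i x) atTop (𝓝 l) := fun x hx =>
    ⟨_, tendsto_atTop_ciSup (fun i j hij => hmono i j hij x hx)
      ⟨b * ‖x‖, by rintro _ ⟨i, rfl⟩; exact (le_abs_self _).trans (hbound i x)⟩⟩
  have hall : ∀ x, ∃ l, Tendsto (fun i => g i x) atTop (𝓝 l) := by
    intro x
    obtain ⟨y, hy, z, hz, rfl⟩ := hgen x
    obtain ⟨l, hl⟩ := hcone y hy
    obtain ⟨l', hl'⟩ := hcone z hz
    exact ⟨l - l', by simpa using hl.sub hl'⟩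
  choose F hF using hall
  let s := linearMapOfTendsto F (fun i => (g i : X →ₗ[ℝ] ℝ)) (tendsto_pi_nhds.2 hF)
  refine ⟨s.mkContinuous b fun x => ?_, hF⟩
  exact le_of_tendsto (hF x).norm (.of_forall fun i => hbound i x)

theorem exists_tendsto_norm_sub_of_monotone {ι : Type*} [Nonempty ι] [SemilatticeSup ι]
    (hrefl : Function.Surjective (NormedSpace.inclusionInDoubleDual ℝ X)) (hM : 0 < M)
    (hdec : C.IsBoundedlyGenerating M) {g : ι → X →L[ℝ] ℝ}
    (hmono : ∀ i j, i ≤ j → dualLE C (g i) (g j)) {b : ℝ} (hb : ∀ i, ‖g i‖ ≤ b) :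
    ∃ s : X →L[ℝ] ℝ, (∀ i, dualPos C (s - g i)) ∧
      Tendsto (fun i => ‖s - g i‖) atTop (𝓝 0) := by
  obtain ⟨s, hs⟩ := exists_tendsto_apply_of_monotone hdec.exists_eq_sub hmono hb
  have hpos : ∀ i, dualPos C (s - g i) := fun i x hx =>
    sub_nonneg.2 <| ge_of_tendsto (hs x) <|
      eventually_atTop.2 ⟨i, fun j hij => hmono i j hij x hx⟩
  refine ⟨s, hpos, tendsto_order.2 ⟨fun a ha => .of_forall fun i => ha.trans_le (norm_nonneg _),
    fun ε hε => ?_⟩⟩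
  have hε' : 0 < ε / (2 * M) := by positivity
  filter_upwards [eventually_forall_lt_of_antitone hrefl (S := C) (h := fun i => s - g i)
    (fun i j hij x hx => by simp only [sub_apply]; linarith [hmono i j hij x hx])
    (fun x => by simpa using (tendsto_const_nhds (x := s x)).sub (hs x)) hε'] with i hi
  calc ‖s - g i‖ ≤ M * (ε / (2 * M)) :=
        norm_le_of_dualPos hM.le hdec (hpos i) hε'.le fun x hx hx₁ => (hi x hx hx₁).le
    _ < ε := by field_simp; linarith

end KB

section SpanNorm

variable {X : Type*} [NormedAddCommGroup X] [NormedSpace ℝ X] {P : Set X} {f : X →L[ℝ] ℝ}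

theorem inDualSpan_of_dualPos (hf : dualPos P f) : inDualSpan P f :=
  ⟨f, hf, 0, fun _ _ => le_rfl, (sub_zero f).symm⟩

theorem norm_le_dualSpanNorm (hf : inDualSpan P f) : ‖f‖ ≤ dualSpanNorm P f := by
  obtain ⟨g, hg, h, hh, rfl⟩ := hf
  refine le_csInf ⟨_, g, hg, h, hh, rfl, rfl⟩ ?_
  rintro _ ⟨g', -, h', -, heq, rfl⟩
  rw [heq]
  exact norm_sub_le g' h'

theorem dualSpanNorm_eq_norm (hf : dualPos P f) : dualSpanNorm P f = ‖f‖ := by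
  refine le_antisymm (csInf_le ⟨0, ?_⟩ ⟨f, hf, 0, fun _ _ => le_rfl, by simp, by simp⟩)
    (norm_le_dualSpanNorm (inDualSpan_of_dualPos hf))
  rintro _ ⟨g, -, h, -, -, rfl⟩
  positivity

end SpanNorm

theorem stmt11_general {X Z : Type*}
    [NormedAddCommGroup X] [NormedSpace ℝ X] [CompleteSpace X]
    [NormedAddCommGroup Z] [Lattice Z] [IsOrderedAddMonoid Z] [NormedSpace ℝ Z]
    (hrefl : Function.Surjective (NormedSpace.inclusionInDoubleDual ℝ X))
    (P : Set X) (hPclosed : IsClosed P)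
    (hPadd : ∀ x ∈ P, ∀ y ∈ P, x + y ∈ P)
    (hPsmul : ∀ (a : ℝ), 0 ≤ a → ∀ x ∈ P, a • x ∈ P)
    (hgen : ∀ x : X, ∃ y ∈ P, ∃ z ∈ P, x = y - z)
    (J : X →L[ℝ] Z) (hJ : ∀ x ∈ P, 0 ≤ J x)
    (R : ℕ → Z →L[ℝ] X) (hR : ∀ n, ∀ z : Z, 0 ≤ z → R n z ∈ P)
    (hWOT : ∀ (x : X) (φ : X →L[ℝ] ℝ),
      Tendsto (fun n => φ (R n (J x))) atTop (𝓝 (φ x))) :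
    -- `span(X'₊)` is a vector lattice:
    (∀ f : X →L[ℝ] ℝ, inDualSpan P f →
      ∃ m : X →L[ℝ] ℝ, dualPos P m ∧ dualLE P f m ∧ dualLE P (-f) m ∧
        ∀ u : X →L[ℝ] ℝ, inDualSpan P u → dualLE P f u → dualLE P (-f) u →
          dualLE P m u) ∧
    -- KB-property: increasing span-norm-bounded nets in `X'₊` are span-norm convergent:
    (∀ (ι : Type) [Nonempty ι] [SemilatticeSup ι] (g : ι → X →L[ℝ] ℝ),
      (∀ i, dualPos P (g i)) →
      (∀ i j, i ≤ j → dualLE P (g i) (g j)) →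
      (∃ b : ℝ, ∀ i, dualSpanNorm P (g i) ≤ b) →
      ∃ s : X →L[ℝ] ℝ, inDualSpan P s ∧
        Tendsto (fun i => dualSpanNorm P (s - g i)) atTop (𝓝 0)) := by
  have h0 : (0 : X) ∈ P := by
    obtain ⟨y, hy, -⟩ := hgen 0
    simpa using hPsmul 0 le_rfl y hy
  let C : PointedCone ℝ X :=
    { carrier := P
      add_mem' := fun hx hy => hPadd _ hx _ hy
      zero_mem' := h0
      smul_mem' := fun a x hx => hPsmul a a.2 x hx }
  obtain ⟨M, hM, hdec⟩ := PointedCone.exists_isBoundedlyGenerating (C := C) hPclosed hgen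
  refine ⟨fun f hf => ?_, fun ι _ _ g hpos hmono ⟨b, hb⟩ => ?_⟩
  · obtain ⟨m, hm, hfm, hfm', hleast⟩ := exists_modulus_of_inDualSpan hdec (J : X →+ Z) hJ
      (fun n => (R n : Z →+ X)) hR hWOT hf
    exact ⟨m, hm, hfm, hfm', fun u _ => hleast u⟩
  · obtain ⟨s, hs, hlim⟩ := exists_tendsto_norm_sub_of_monotone hrefl hM hdec hmono fun i =>
      (norm_le_dualSpanNorm (inDualSpan_of_dualPos (hpos i))).trans (hb i)
    obtain ⟨i₀⟩ := ‹Nonempty ι›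
    have hspos : dualPos P s := fun x hx => by simpa using add_nonneg (hs i₀ x hx) (hpos i₀ x hx)
    exact ⟨s, inDualSpan_of_dualPos hspos, hlim.congr fun i => (dualSpanNorm_eq_norm (hs i)).symm⟩

/-- Let `X` be a reflexive ordered Banach space with generating (closed)
cone `P`, `Z` a Banach lattice, `J : X → Z` positive and `(Rₙ) : Z → X` positive with
`Rₙ J → id_X` in the weak operator topology. Then `span(X'₊)` (with an equivalent norm)
is a KB-space: it is a vector lattice and every increasing norm-bounded net in its
positive cone converges with respect to the span norm. -/
theorem stmt11 {X Z : Type*}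
    [NormedAddCommGroup X] [NormedSpace ℝ X] [CompleteSpace X]
    [NormedAddCommGroup Z] [Lattice Z] [HasSolidNorm Z] [IsOrderedAddMonoid Z] [NormedSpace ℝ Z] [CompleteSpace Z]
    (hrefl : Function.Surjective (NormedSpace.inclusionInDoubleDual ℝ X))
    (P : Set X) (hPclosed : IsClosed P)
    (hPadd : ∀ x ∈ P, ∀ y ∈ P, x + y ∈ P)
    (hPsmul : ∀ (a : ℝ), 0 ≤ a → ∀ x ∈ P, a • x ∈ P)
    (hPpointed : ∀ x ∈ P, -x ∈ P → x = 0)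
    (hgen : ∀ x : X, ∃ y ∈ P, ∃ z ∈ P, x = y - z)
    (J : X →L[ℝ] Z) (hJ : ∀ x ∈ P, 0 ≤ J x)
    (R : ℕ → Z →L[ℝ] X) (hR : ∀ n, ∀ z : Z, 0 ≤ z → R n z ∈ P)
    (hWOT : ∀ (x : X) (φ : X →L[ℝ] ℝ),
      Tendsto (fun n => φ (R n (J x))) atTop (𝓝 (φ x))) :
    -- `span(X'₊)` is a vector lattice:
    (∀ f : X →L[ℝ] ℝ, inDualSpan P f →
      ∃ m : X →L[ℝ] ℝ, dualPos P m ∧ dualLE P f m ∧ dualLE P (-f) m ∧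
        ∀ u : X →L[ℝ] ℝ, inDualSpan P u → dualLE P f u → dualLE P (-f) u →
          dualLE P m u) ∧
    -- KB-property: increasing span-norm-bounded nets in `X'₊` are span-norm convergent:
    (∀ (ι : Type) [Nonempty ι] [SemilatticeSup ι] (g : ι → X →L[ℝ] ℝ),
      (∀ i, dualPos P (g i)) →
      (∀ i j, i ≤ j → dualLE P (g i) (g j)) →
      (∃ b : ℝ, ∀ i, dualSpanNorm P (g i) ≤ b) →
      ∃ s : X →L[ℝ] ℝ, inDualSpan P s ∧
        Tendsto (fun i => dualSpanNorm P (s - g i)) atTop (𝓝 0)) :=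
  stmt11_general hrefl P hPclosed hPadd hPsmul hgen J hJ R hR hWOT
end

section
/- Let Ω ⊆ ℝ^d be a non-empty open set with continuous boundary and x₀ ∈ closure(Ω). Then there exist a bounded open neighbourhood V of x₀ and a sequence of bijective affine maps A_n(x) = B_n x + b_n on ℝ^d such that B_n → id, b_n → 0, and closure(A_n(Ω ∩ V)) ⊆ Ω for every n. -/
/-!
Translations alone suffice (`Bₙ = id`). At an interior point take `V` a ball whose closure
lies in `Ω`, and `bₙ = 0`. At a boundary point, in the chart `M` the set `Ω` is locally the
strict supergraph of a continuous function, whose closure is the non-strict supergraph;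
pushing the closure of a smaller ball upwards by `tₙ > 0`, `tₙ → 0`, lands in the strict
supergraph. Since `M` is affine (Mazur–Ulam), this upward shift is a translation in the
original coordinates.
-/

open Filter Topology

open Metric Set

theorem IsometryEquiv.apply_add_symm_sub {E F : Type*} [NormedAddCommGroup E] [NormedSpace ℝ E]
    [NormedAddCommGroup F] [NormedSpace ℝ F] (M : E ≃ᵢ F) (x : E) (v : F) :
    M (x + (M.symm v - M.symm 0)) = M x + v := by
  set A := M.toRealAffineIsometryEquiv
  have hA : ⇑A = M := M.coeFn_toRealAffineIsometryEquiv
  calc M (x + (M.symm v - M.symm 0))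
      = A ((M.symm v -ᵥ M.symm 0) +ᵥ x) := by rw [hA, vsub_eq_sub, vadd_eq_add, add_comm]
    _ = (A (M.symm v) -ᵥ A (M.symm 0)) +ᵥ A x := by rw [A.map_vadd, A.map_vsub]
    _ = M x + v := by simp [hA, add_comm]

section

variable {E : Type*} [NormedAddCommGroup E]

theorem add_smul_mem_of_mem_closure_sublevel [NormedSpace ℝ E] {ψ : E → ℝ} (hψ : Continuous ψ)
    {e : E} (hψe : ∀ x, ∀ t > (0 : ℝ), ψ (x + t • e) < ψ x) {r s t : ℝ} {z : E}
    (hz : z ∈ closure {x ∈ ball 0 s | ψ x < 0}) (ht : 0 < t) (hst : s + ‖t • e‖ < r) :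
    z + t • e ∈ {x ∈ ball 0 r | ψ x < 0} := by
  have hz' : z ∈ closedBall 0 s ∩ {x | ψ x ≤ 0} :=
    closure_minimal (inter_subset_inter ball_subset_closedBall fun _ => le_of_lt)
      (isClosed_closedBall.inter (isClosed_le hψ continuous_const)) hz
  refine ⟨?_, (hψe z t ht).trans_le hz'.2⟩
  rw [mem_ball_zero_iff]
  calc ‖z + t • e‖ ≤ ‖z‖ + ‖t • e‖ := norm_add_le _ _
    _ ≤ s + ‖t • e‖ := by gcongr; simpa using hz'.1
    _ < r := hst

def HasInwardTranslations (Ω : Set E) (x₀ : E) : Prop :=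
  ∃ V : Set E, IsOpen V ∧ Bornology.IsBounded V ∧ x₀ ∈ V ∧
    ∃ b : ℕ → E, Tendsto b atTop (𝓝 0) ∧ ∀ n, ∀ z ∈ closure (Ω ∩ V), z + b n ∈ Ω

theorem hasInwardTranslations_of_mem {Ω : Set E} (hΩ : IsOpen Ω) {x₀ : E} (hx₀ : x₀ ∈ Ω) :
    HasInwardTranslations Ω x₀ := by
  obtain ⟨ε, hε, hεΩ⟩ := nhds_basis_closedBall.mem_iff.mp (hΩ.mem_nhds hx₀)
  refine ⟨ball x₀ ε, isOpen_ball, isBounded_ball, mem_ball_self hε, 0, tendsto_const_nhds,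
    fun n z hz => ?_⟩
  have : closure (Ω ∩ ball x₀ ε) ⊆ closedBall x₀ ε :=
    closure_minimal (inter_subset_right.trans ball_subset_closedBall) isClosed_closedBall
  simpa using hεΩ (this hz)

theorem HasInwardTranslations.exists_affine [NormedSpace ℝ E] {Ω : Set E} {x₀ : E}
    (h : HasInwardTranslations Ω x₀) :
    ∃ V : Set E, IsOpen V ∧ Bornology.IsBounded V ∧ x₀ ∈ V ∧
      ∃ B : ℕ → E →L[ℝ] E, ∃ b : ℕ → E,
        (∀ n, Function.Bijective (B n)) ∧
        Tendsto B atTop (𝓝 (ContinuousLinearMap.id ℝ E)) ∧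
        Tendsto b atTop (𝓝 0) ∧
        ∀ n, closure ((fun x => B n x + b n) '' (Ω ∩ V)) ⊆ Ω := by
  obtain ⟨V, hVo, hVb, hx₀V, b, hb, hbΩ⟩ := h
  refine ⟨V, hVo, hVb, hx₀V, fun _ => ContinuousLinearMap.id ℝ E, b,
    fun _ => Function.bijective_id, tendsto_const_nhds, hb, fun n => ?_⟩
  change closure (Homeomorph.addRight (b n) '' (Ω ∩ V)) ⊆ Ω
  rw [← Homeomorph.image_closure]
  rintro _ ⟨z, hz, rfl⟩
  exact hbΩ n z hz

theorem hasInwardTranslations_of_isometryEquiv [NormedSpace ℝ E] {E' : Type*}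
    [NormedAddCommGroup E'] [NormedSpace ℝ E'] {Ω : Set E} {x₀ : E} {r : ℝ} (hr : 0 < r)
    (M : E ≃ᵢ E') (hM : M x₀ = 0) {ψ : E' → ℝ} (hψ : Continuous ψ) {e : E'}
    (hψe : ∀ x, ∀ t > (0 : ℝ), ψ (x + t • e) < ψ x)
    (himg : M '' (Ω ∩ ball x₀ r) = {x ∈ ball 0 r | ψ x < 0}) :
    HasInwardTranslations Ω x₀ := by
  set δ := r / (2 * (‖e‖ + 1))
  set t : ℕ → ℝ := fun n => δ / (n + 1)
  have ht_pos : ∀ n, 0 < t n := fun n => by positivity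
  have ht_small : ∀ n, ‖t n • e‖ < r / 2 := fun n => by
    have hδ : δ * ‖e‖ < r / 2 := by
      rw [div_mul_eq_mul_div, div_lt_div_iff₀ (by positivity) two_pos]
      nlinarith
    calc ‖t n • e‖ = t n * ‖e‖ := by rw [norm_smul, Real.norm_of_nonneg (ht_pos n).le]
      _ ≤ δ * ‖e‖ := by gcongr; exact div_le_self (by positivity) (by simp)
      _ < r / 2 := hδ
  have ht : Tendsto t atTop (𝓝 0) := by
    simpa [t, div_eq_mul_inv] using tendsto_one_div_add_atTop_nhds_zero_nat.const_mul δ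
  refine ⟨ball x₀ (r / 2), isOpen_ball, isBounded_ball, mem_ball_self (by positivity),
    fun n => M.symm (t n • e) - M.symm 0, ?_, fun n z hz => ?_⟩
  · have : Tendsto (fun n => M.symm (t n • e)) atTop (𝓝 (M.symm 0)) :=
      (M.symm.continuous.tendsto 0).comp (by simpa using ht.smul_const e)
    simpa using this.sub_const (M.symm 0)
  · have hmodel : M '' (Ω ∩ ball x₀ (r / 2)) ⊆ {x ∈ ball 0 (r / 2) | ψ x < 0} := by
      rintro _ ⟨w, ⟨hwΩ, hw⟩, rfl⟩
      have hw' : M w ∈ M '' (Ω ∩ ball x₀ r) :=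
        mem_image_of_mem M ⟨hwΩ, ball_subset_ball (half_le_self hr.le) hw⟩
      rw [himg] at hw'
      exact ⟨by rwa [mem_ball, ← hM, M.dist_eq], hw'.2⟩
    have hMz : M z ∈ closure {x ∈ ball 0 (r / 2) | ψ x < 0} :=
      closure_mono hmodel <|
        image_closure_subset_closure_image M.continuous (mem_image_of_mem M hz)
    have hshift : M z + t n • e ∈ M '' (Ω ∩ ball x₀ r) := by
      rw [himg]
      exact add_smul_mem_of_mem_closure_sublevel hψ hψe hMz (ht_pos n)
        (by linarith [ht_small n])
    obtain ⟨w, hw, hMw⟩ := hshift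
    rw [← M.injective (hMw.trans (M.apply_add_symm_sub z _).symm)]
    exact hw.1

end

theorem hasInwardTranslations_of_graph {d : ℕ} (hd : 0 < d)
    {Ω : Set (EuclideanSpace ℝ (Fin d))} {x₀ : EuclideanSpace ℝ (Fin d)} {r : ℝ} (hr : 0 < r)
    (M : EuclideanSpace ℝ (Fin d) ≃ᵢ EuclideanSpace ℝ (Fin d)) (hM : M x₀ = 0)
    {F : EuclideanSpace ℝ (Fin (d - 1)) → ℝ} (hF : Continuous F)
    (himg : M '' (Ω ∩ ball x₀ r) =
      {x ∈ ball (0 : EuclideanSpace ℝ (Fin d)) r |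
        F (WithLp.toLp 2 (fun i => x (Fin.castLE (Nat.sub_le d 1) i))) <
          x ⟨d - 1, Nat.sub_lt hd Nat.one_pos⟩}) :
    HasInwardTranslations Ω x₀ := by
  set D : Fin d := ⟨d - 1, Nat.sub_lt hd Nat.one_pos⟩
  have hD : ∀ i : Fin (d - 1), Fin.castLE (Nat.sub_le d 1) i ≠ D := fun i h =>
    i.isLt.ne (congrArg Fin.val h)
  refine hasInwardTranslations_of_isometryEquiv hr M hM
    (ψ := fun x => F (WithLp.toLp 2 (fun i => x (Fin.castLE (Nat.sub_le d 1) i))) - x D)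
    (e := EuclideanSpace.single D 1) (by fun_prop) (fun x t ht => ?_)
    (by simpa [sub_neg] using himg)
  simp [hD, ht]

theorem stmt18_general (d : ℕ) (hd : 0 < d)
    (Ω : Set (EuclideanSpace ℝ (Fin d))) (hΩopen : IsOpen Ω)
    (hbd : ∀ y₀ ∈ frontier Ω, ∃ r > (0 : ℝ),
      ∃ M : EuclideanSpace ℝ (Fin d) ≃ᵢ EuclideanSpace ℝ (Fin d),
      ∃ F : EuclideanSpace ℝ (Fin (d - 1)) → ℝ, Continuous F ∧ M y₀ = 0 ∧
        M '' (Ω ∩ Metric.ball y₀ r) =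
          {x ∈ Metric.ball (0 : EuclideanSpace ℝ (Fin d)) r |
            F (WithLp.toLp 2 (fun i => x (Fin.castLE (Nat.sub_le d 1) i))) <
              x ⟨d - 1, Nat.sub_lt hd Nat.one_pos⟩})
    (x₀ : EuclideanSpace ℝ (Fin d)) (hx₀ : x₀ ∈ closure Ω) :
    ∃ V : Set (EuclideanSpace ℝ (Fin d)), IsOpen V ∧ Bornology.IsBounded V ∧ x₀ ∈ V ∧
      ∃ B : ℕ → EuclideanSpace ℝ (Fin d) →L[ℝ] EuclideanSpace ℝ (Fin d),
      ∃ b : ℕ → EuclideanSpace ℝ (Fin d),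
        (∀ n, Function.Bijective (B n)) ∧
        Tendsto B atTop (𝓝 (ContinuousLinearMap.id ℝ (EuclideanSpace ℝ (Fin d)))) ∧
        Tendsto b atTop (𝓝 0) ∧
        ∀ n, closure ((fun x => B n x + b n) '' (Ω ∩ V)) ⊆ Ω := by
  refine HasInwardTranslations.exists_affine ?_
  by_cases hx : x₀ ∈ Ω
  · exact hasInwardTranslations_of_mem hΩopen hx
  · have hfront : x₀ ∈ frontier Ω := ⟨hx₀, by rwa [hΩopen.interior_eq]⟩
    obtain ⟨r, hr, M, F, hF, hM, himg⟩ := hbd x₀ hfront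
    exact hasInwardTranslations_of_graph hd hr M hM hF himg

/-- Let `Ω ⊆ ℝ^d` be a non-empty open set with continuous boundary
(every boundary point has, after a rigid motion, a local representation of `Ω` as the
open region above the graph of a continuous function) and let `x₀ ∈ closure Ω`. Then
there exist a bounded open neighbourhood `V` of `x₀` and bijective affine maps
`Aₙ x = Bₙ x + bₙ` with `Bₙ → id`, `bₙ → 0` and `closure (Aₙ (Ω ∩ V)) ⊆ Ω` for all `n`. -/
theorem stmt18 (d : ℕ) (hd : 0 < d)
    (Ω : Set (EuclideanSpace ℝ (Fin d))) (hΩopen : IsOpen Ω) (hΩne : Ω.Nonempty)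
    (hbd : ∀ y₀ ∈ frontier Ω, ∃ r > (0 : ℝ),
      ∃ M : EuclideanSpace ℝ (Fin d) ≃ᵢ EuclideanSpace ℝ (Fin d),
      ∃ F : EuclideanSpace ℝ (Fin (d - 1)) → ℝ, Continuous F ∧ M y₀ = 0 ∧
        M '' (Ω ∩ Metric.ball y₀ r) =
          {x ∈ Metric.ball (0 : EuclideanSpace ℝ (Fin d)) r |
            F (WithLp.toLp 2 (fun i => x (Fin.castLE (Nat.sub_le d 1) i))) <
              x ⟨d - 1, Nat.sub_lt hd Nat.one_pos⟩})
    (x₀ : EuclideanSpace ℝ (Fin d)) (hx₀ : x₀ ∈ closure Ω) :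
    ∃ V : Set (EuclideanSpace ℝ (Fin d)), IsOpen V ∧ Bornology.IsBounded V ∧ x₀ ∈ V ∧
      ∃ B : ℕ → EuclideanSpace ℝ (Fin d) →L[ℝ] EuclideanSpace ℝ (Fin d),
      ∃ b : ℕ → EuclideanSpace ℝ (Fin d),
        (∀ n, Function.Bijective (B n)) ∧
        Tendsto B atTop (𝓝 (ContinuousLinearMap.id ℝ (EuclideanSpace ℝ (Fin d)))) ∧
        Tendsto b atTop (𝓝 0) ∧
        ∀ n, closure ((fun x => B n x + b n) '' (Ω ∩ V)) ⊆ Ω :=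
  stmt18_general d hd Ω hΩopen hbd x₀ hx₀
end
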